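/- arXiv:1201.4647 — 11 statements merged into one kernel-verified Lean document; each statement's English description precedes it below -/
import Mathlib

section
/- In the classical island problem, the posterior odds of guilt equal 1/(Np): if C is uniform on a population of N+1 individuals, S is independent of C, and each individual independently has trait Γ with probability p ∈ (0,1], then P(C=s | S=s, Γ_C=1, Γ_s=1) / P(C≠s | S=s, Γ_C=1, Γ_s=1) = 1/(Np). -/
/-!
By Bayes' rule the posterior odds of `C = s` given the evidence `E` are the ratio of the joint
weights `μ (E ∩ {C = x})` at `x = s` and summed over `x ≠ s`. Independence of `(C, S)` from the
traits factors each weight as `P(C = x, S = s) · P(Γ_x = Γ_s = 1)`, which is `q p / (N + 1)` at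
`x = s` and `q p² / (N + 1)` at each of the `N` other points, where `q = P(S = s)`. The common
factor `q p / (N + 1)` cancels; it is nonzero because `E` has positive probability.
-/

open MeasureTheory ProbabilityTheory
open scoped ENNReal

section Odds

variable {Ω X : Type*} [MeasurableSpace Ω] {μ : Measure Ω}
  [MeasurableSpace X] [MeasurableSingletonClass X] {C : Ω → X}

theorem measure_inter_mem_finset_eq_sum (hC : Measurable C) (E : Set Ω) (T : Finset X) :
    μ (E ∩ {ω | C ω ∈ T}) = ∑ x ∈ T, μ (E ∩ {ω | C ω = x}) := by
  have hfib : ∀ x ∈ T, MeasurableSet (C ⁻¹' {x}) := fun x _ => hC (measurableSet_singleton x)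
  calc μ (E ∩ {ω | C ω ∈ T}) = μ.restrict E (C ⁻¹' T) := by
        rw [Measure.restrict_apply (hC T.measurableSet), Set.inter_comm]; rfl
    _ = ∑ x ∈ T, μ.restrict E (C ⁻¹' {x}) := (sum_measure_preimage_singleton T hfib).symm
    _ = ∑ x ∈ T, μ (E ∩ {ω | C ω = x}) := by
        simp only [Measure.restrict_apply (hC (measurableSet_singleton _)), Set.inter_comm]; rfl

theorem cond_div_cond {E A B : Set Ω} (hA : MeasurableSet A) (hB : MeasurableSet B)
    (hE₀ : μ E ≠ 0) (hE : μ E ≠ ∞) :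
    μ[A | E] / μ[B | E] = μ (E ∩ A) / μ (E ∩ B) := by
  rw [cond_apply' hA, cond_apply' hB,
    ENNReal.mul_div_mul_left _ _ (ENNReal.inv_ne_zero.2 hE) (ENNReal.inv_ne_top.2 hE₀)]

theorem cond_odds_eq_of_weights [IsFiniteMeasure μ] [Fintype X] (hC : Measurable C) {N : ℕ}
    (hX : Fintype.card X = N + 1) {E : Set Ω} (hE : μ E ≠ 0) {s : X} {c r : ℝ≥0∞}
    (hs : μ (E ∩ {ω | C ω = s}) = c) (hne : ∀ x ≠ s, μ (E ∩ {ω | C ω = x}) = c * r) :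
    μ[{ω | C ω = s} | E] / μ[{ω | C ω ≠ s} | E] = 1 / (N * r) := by
  classical
  have hCs : MeasurableSet {ω | C ω = s} := hC (measurableSet_singleton s)
  have hCne : MeasurableSet {ω | C ω ≠ s} := hC (measurableSet_singleton s).compl
  have hsum : μ (E ∩ {ω | C ω ≠ s}) = N * r * c := by
    rw [show {ω | C ω ≠ s} = {ω | C ω ∈ Finset.univ.erase s} by ext; simp,
      measure_inter_mem_finset_eq_sum hC,
      Finset.sum_congr rfl fun x hx => hne x (Finset.ne_of_mem_erase hx), Finset.sum_const,
      Finset.card_erase_of_mem (Finset.mem_univ s), Finset.card_univ, hX, nsmul_eq_mul]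
    push_cast
    ring
  have hc : c ≠ 0 := by
    rintro rfl
    apply hE
    rw [← measure_inter_add_sdiff E hCs]
    change μ (E ∩ {ω | C ω = s}) + μ (E ∩ {ω | C ω ≠ s}) = 0
    rw [hs, hsum, mul_zero, add_zero]
  have hc_top : c ≠ ∞ := hs ▸ measure_ne_top μ _
  calc μ[{ω | C ω = s} | E] / μ[{ω | C ω ≠ s} | E] = 1 * c / (N * r * c) := by
        rw [cond_div_cond hCs hCne hE (measure_ne_top μ E), hs, hsum, one_mul]
    _ = 1 / (N * r) := ENNReal.mul_div_mul_right _ _ hc hc_top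

end Odds

theorem measure_evidence_inter_culprit_eq_mul {Ω X : Type*} [MeasurableSpace Ω]
    {μ : Measure Ω} [MeasurableSpace X] [MeasurableSingletonClass X] {C S : Ω → X}
    {Γ : X → Ω → Bool} (hind : IndepFun (fun ω => (C ω, S ω)) (fun ω x => Γ x ω) μ) (s x : X) :
    μ ({ω | S ω = s} ∩ {ω | Γ (C ω) ω = true} ∩ {ω | Γ s ω = true} ∩ {ω | C ω = x})
      = μ ({ω | C ω = x} ∩ {ω | S ω = s}) * μ ({ω | Γ x ω = true} ∩ {ω | Γ s ω = true}) := by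
  have hpair : MeasurableSet ({x} ×ˢ {s} : Set (X × X)) :=
    (measurableSet_singleton x).prod (measurableSet_singleton s)
  have htraits : MeasurableSet {h : X → Bool | h x = true ∧ h s = true} :=
    ((measurableSet_singleton true).preimage (measurable_pi_apply x)).inter
      ((measurableSet_singleton true).preimage (measurable_pi_apply s))
  have hevent : {ω | S ω = s} ∩ {ω | Γ (C ω) ω = true} ∩ {ω | Γ s ω = true} ∩ {ω | C ω = x}
      = (fun ω => (C ω, S ω)) ⁻¹' ({x} ×ˢ {s})
        ∩ (fun ω x => Γ x ω) ⁻¹' {h : X → Bool | h x = true ∧ h s = true} := by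
    ext ω
    constructor
    · rintro ⟨⟨⟨hS, hΓC⟩, hΓs⟩, rfl⟩
      exact ⟨⟨rfl, hS⟩, hΓC, hΓs⟩
    · rintro ⟨⟨rfl, hS⟩, hΓC, hΓs⟩
      exact ⟨⟨⟨hS, hΓC⟩, hΓs⟩, rfl⟩
  rw [hevent, hind.measure_inter_preimage_eq_mul _ _ hpair htraits]
  rfl

theorem island_classical_posterior_odds_general
    {Ω : Type*} [MeasurableSpace Ω] (μ : Measure Ω) [IsProbabilityMeasure μ]
    {X : Type*} [Fintype X] [MeasurableSpace X] [MeasurableSingletonClass X]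
    (N : ℕ) (hX : Fintype.card X = N + 1)
    (C S : Ω → X) (hC : Measurable C)
    (Γ : X → Ω → Bool)
    (p : ℝ≥0∞)
    (hCunif : ∀ x : X, μ {ω | C ω = x} = 1 / (N + 1))
    (hCS : IndepFun C S μ)
    (hiid : iIndepFun Γ μ)
    (hBer : ∀ x, μ {ω | Γ x ω = true} = p)
    (hind : IndepFun (fun ω => (C ω, S ω)) (fun ω x => Γ x ω) μ)
    (s : X)
    (hpos : μ ({ω | S ω = s} ∩ {ω | Γ (C ω) ω = true} ∩ {ω | Γ s ω = true}) ≠ 0) :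
    μ[|{ω | S ω = s} ∩ {ω | Γ (C ω) ω = true} ∩ {ω | Γ s ω = true}] {ω | C ω = s}
      / μ[|{ω | S ω = s} ∩ {ω | Γ (C ω) ω = true} ∩ {ω | Γ s ω = true}] {ω | C ω ≠ s}
      = 1 / (N * p) := by
  have hprior (x : X) :
      μ ({ω | C ω = x} ∩ {ω | S ω = s}) = 1 / (N + 1) * μ {ω | S ω = s} := by
    rw [← hCunif x]
    exact hCS.measure_inter_preimage_eq_mul _ _ (measurableSet_singleton x)
      (measurableSet_singleton s)
  refine cond_odds_eq_of_weights hC hX hpos (c := 1 / (N + 1) * μ {ω | S ω = s} * p)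
    ?_ fun x hx => ?_
  · rw [measure_evidence_inter_culprit_eq_mul hind, hprior, Set.inter_self, hBer]
  · have htraits : μ ({ω | Γ x ω = true} ∩ {ω | Γ s ω = true}) = p * p :=
      ((hiid.indepFun hx).measure_inter_preimage_eq_mul _ _
        (measurableSet_singleton true) (measurableSet_singleton true)).trans
          (congrArg₂ (· * ·) (hBer x) (hBer s))
    rw [measure_evidence_inter_culprit_eq_mul hind, hprior, htraits]
    ring

/-- Classical island problem: posterior odds of guilt equal `1/(N p)`. -/
theorem island_classical_posterior_odds
    {Ω : Type*} [MeasurableSpace Ω] (μ : Measure Ω) [IsProbabilityMeasure μ]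
    {X : Type*} [Fintype X] [MeasurableSpace X] [MeasurableSingletonClass X]
    (N : ℕ) (hX : Fintype.card X = N + 1)
    (C S : Ω → X) (hC : Measurable C) (hS : Measurable S)
    (Γ : X → Ω → Bool) (hΓ : ∀ x, Measurable (Γ x))
    (p : ℝ≥0∞) (hp0 : p ≠ 0) (hp1 : p ≤ 1)
    (hCunif : ∀ x : X, μ {ω | C ω = x} = 1 / (N + 1))
    (hCS : IndepFun C S μ)
    (hiid : iIndepFun Γ μ)
    (hBer : ∀ x, μ {ω | Γ x ω = true} = p)
    (hind : IndepFun (fun ω => (C ω, S ω)) (fun ω x => Γ x ω) μ)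
    (s : X)
    (hpos : μ ({ω | S ω = s} ∩ {ω | Γ (C ω) ω = true} ∩ {ω | Γ s ω = true}) ≠ 0) :
    μ[|{ω | S ω = s} ∩ {ω | Γ (C ω) ω = true} ∩ {ω | Γ s ω = true}] {ω | C ω = s}
      / μ[|{ω | S ω = s} ∩ {ω | Γ (C ω) ω = true} ∩ {ω | Γ s ω = true}] {ω | C ω ≠ s}
      = 1 / (N * p) :=
  island_classical_posterior_odds_general μ N hX C S hC Γ p hCunif hCS hiid hBer hind s hpos
end

section
/- Expected number of Γ-bearers given the criminal bears Γ: under the classical island model, E[U | Γ_C = 1] = 1 + Np, and consequently the posterior probability of guilt satisfies P(C=s | S=s, Γ_C=1, Γ_s=1) = 1 / E[U | Γ_C = 1]. -/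
open MeasureTheory ProbabilityTheory
open scoped ENNReal

/-!
Split every event on the value of the culprit `C`. Since `(C, S)` is independent of the family
`Γ`, `P(S ∈ K, Γ_C, Γ_y) = ∑ₓ P(C = x, S ∈ K) P(Γ_x, Γ_y)`, where `P(Γ_x, Γ_y)` is `p` on the
diagonal and `p²` off it; with `C` uniform and independent of `S` this is
`P(S ∈ K) (p + N p²) / (N + 1)`. Taking `K` to be everything and summing over `y` gives
`E[U; Γ_C] = p (1 + N p)`, and `P(Γ_C) = p`. Taking `K = {s}`, `y = s`, the event `C = s`
contributes only the diagonal term `P(S = s) p / (N + 1)`, so the posterior is `1 / (1 + N p)`.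
-/

theorem Finset.sum_mul_ite_eq_of_card_eq {X R : Type*} [Fintype X] [DecidableEq X]
    [CommSemiring R] {N : ℕ} (hX : Fintype.card X = N + 1) (c a b : R) (y : X) :
    ∑ x, c * (if x = y then a else b) = c * (a + N * b) := by
  rw [← Finset.mul_sum, Finset.sum_ite, Finset.filter_eq', Finset.filter_ne',
    if_pos (mem_univ y), Finset.sum_const, Finset.sum_const, Finset.card_singleton,
    Finset.card_erase_of_mem (mem_univ y), Finset.card_univ, hX, Nat.add_sub_cancel, one_smul,
    nsmul_eq_mul]

theorem lintegral_count_true_eq_sum {Ω X : Type*} [MeasurableSpace Ω] [Fintype X]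
    (ν : Measure Ω) {Γ : X → Ω → Bool} (hΓ : ∀ x, Measurable (Γ x)) :
    ∫⁻ ω, ((∑ x, if Γ x ω then 1 else 0 : ℕ) : ℝ≥0∞) ∂ν = ∑ x, ν {ω | Γ x ω = true} := by
  have hmeas : ∀ x, MeasurableSet {ω | Γ x ω = true} := fun x => hΓ x (measurableSet_singleton _)
  have hsum : ∀ ω, ((∑ x, if Γ x ω then 1 else 0 : ℕ) : ℝ≥0∞)
      = ∑ x, {ω | Γ x ω = true}.indicator 1 ω := by
    intro ω
    push_cast
    simp [Set.indicator_apply]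
  simp_rw [hsum]
  rw [lintegral_finsetSum (f := fun x => {ω | Γ x ω = true}.indicator 1) _
    fun x _ => measurable_const.indicator (hmeas x)]
  simp_rw [lintegral_indicator_one (hmeas _)]

theorem measurableSet_apply_eq_true {X : Type*} (x : X) :
    MeasurableSet {f : X → Bool | f x = true} :=
  (measurableSet_singleton true).preimage (measurable_pi_apply x)

section Independence

variable {Ω X Y β : Type*} [MeasurableSpace Ω] {μ : Measure Ω}
  [MeasurableSpace X] [MeasurableSingletonClass X] [MeasurableSpace Y] [MeasurableSpace β]
  {C : Ω → X} {S : Ω → Y} {G : Ω → β}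

theorem measure_fiber_inter_preimage_eq_mul (hind : IndepFun (fun ω => (C ω, S ω)) G μ)
    (x : X) {K : Set Y} (hK : MeasurableSet K) {E : Set β} (hE : MeasurableSet E) :
    μ ({ω | C ω = x} ∩ S ⁻¹' K ∩ G ⁻¹' E) = μ ({ω | C ω = x} ∩ S ⁻¹' K) * μ (G ⁻¹' E) :=
  hind.measure_inter_preimage_eq_mul _ _ ((measurableSet_singleton x).prod hK) hE

theorem measure_preimage_inter_setOf_mem_eq_sum [Fintype X] (hC : Measurable C) (hS : Measurable S)
    (hG : Measurable G) (hind : IndepFun (fun ω => (C ω, S ω)) G μ)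
    {K : Set Y} (hK : MeasurableSet K) {E : X → Set β} (hE : ∀ x, MeasurableSet (E x)) :
    μ (S ⁻¹' K ∩ {ω | G ω ∈ E (C ω)})
      = ∑ x, μ ({ω | C ω = x} ∩ S ⁻¹' K) * μ (G ⁻¹' E x) := by
  have hunion : S ⁻¹' K ∩ {ω | G ω ∈ E (C ω)}
      = ⋃ x, {ω | C ω = x} ∩ S ⁻¹' K ∩ G ⁻¹' E x := by
    ext ω
    simp
  rw [hunion, measure_iUnion, tsum_fintype]
  · exact Finset.sum_congr rfl fun x _ => measure_fiber_inter_preimage_eq_mul hind x hK (hE x)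
  · intro x x' hxx'
    exact Set.disjoint_left.mpr fun ω hx hx' => hxx' (hx.1.1.symm.trans hx'.1.1)
  · exact fun x => ((hC (measurableSet_singleton x)).inter (hS hK)).inter (hG (hE x))

end Independence

section IslandModel

variable {Ω X : Type*} [MeasurableSpace Ω] {μ : Measure Ω} {N : ℕ} {C S : Ω → X}
  {Γ : X → Ω → Bool} {p : ℝ≥0∞}

theorem measure_bearer_inter_bearer [DecidableEq X] (hiid : iIndepFun Γ μ)
    (hBer : ∀ x, μ {ω | Γ x ω = true} = p) (x y : X) :
    μ ({ω | Γ x ω = true} ∩ {ω | Γ y ω = true}) = if x = y then p else p * p := by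
  split_ifs with h
  · rw [h, Set.inter_self, hBer]
  · calc _ = μ {ω | Γ x ω = true} * μ {ω | Γ y ω = true} :=
          (hiid.indepFun h).measure_inter_preimage_eq_mul _ _
            (measurableSet_singleton true) (measurableSet_singleton true)
      _ = p * p := by rw [hBer, hBer]

variable [MeasurableSpace X]

theorem measure_fiber_eq_of_uniform [MeasurableSingletonClass X]
    (hCunif : ∀ x, μ {ω | C ω = x} = 1 / (N + 1)) (hCS : IndepFun C S μ) (x : X)
    {K : Set X} (hK : MeasurableSet K) :
    μ ({ω | C ω = x} ∩ S ⁻¹' K) = ((N : ℝ≥0∞) + 1)⁻¹ * μ (S ⁻¹' K) := by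
  rw [← one_div, ← hCunif x]
  exact hCS.measure_inter_preimage_eq_mul _ _ (measurableSet_singleton x) hK

theorem measurableSet_bearer_comp [Countable X] [MeasurableSingletonClass X] (hC : Measurable C)
    (hΓ : ∀ x, Measurable (Γ x)) : MeasurableSet {ω | Γ (C ω) ω = true} :=
  (measurable_from_prod_countable_right (f := fun q : X × Ω => Γ q.1 q.2) hΓ).comp
    (hC.prodMk measurable_id) (measurableSet_singleton true)

variable [Fintype X] [MeasurableSingletonClass X]

theorem measure_preimage_inter_bearer_comp_inter_bearer (hX : Fintype.card X = N + 1)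
    (hC : Measurable C) (hS : Measurable S) (hΓ : ∀ x, Measurable (Γ x))
    (hCunif : ∀ x, μ {ω | C ω = x} = 1 / (N + 1)) (hCS : IndepFun C S μ)
    (hiid : iIndepFun Γ μ) (hBer : ∀ x, μ {ω | Γ x ω = true} = p)
    (hind : IndepFun (fun ω => (C ω, S ω)) (fun ω x => Γ x ω) μ)
    {K : Set X} (hK : MeasurableSet K) (y : X) :
    μ (S ⁻¹' K ∩ {ω | Γ (C ω) ω = true} ∩ {ω | Γ y ω = true})
      = ((N : ℝ≥0∞) + 1)⁻¹ * μ (S ⁻¹' K) * (p + N * (p * p)) := by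
  classical
  have hE : ∀ x, MeasurableSet ({f : X → Bool | f x = true} ∩ {f | f y = true}) := fun x =>
    (measurableSet_apply_eq_true x).inter (measurableSet_apply_eq_true y)
  have h := measure_preimage_inter_setOf_mem_eq_sum hC hS (measurable_pi_lambda _ hΓ) hind hK hE
  rw [Set.inter_assoc]
  refine h.trans ?_
  simp_rw [measure_fiber_eq_of_uniform hCunif hCS _ hK, Set.preimage_inter,
    Set.preimage_ofPred_eq, measure_bearer_inter_bearer hiid hBer]
  exact Finset.sum_mul_ite_eq_of_card_eq hX _ p (p * p) y

theorem measure_bearer_comp [IsProbabilityMeasure μ] (hX : Fintype.card X = N + 1)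
    (hC : Measurable C) (hS : Measurable S) (hΓ : ∀ x, Measurable (Γ x))
    (hCunif : ∀ x, μ {ω | C ω = x} = 1 / (N + 1))
    (hBer : ∀ x, μ {ω | Γ x ω = true} = p)
    (hind : IndepFun (fun ω => (C ω, S ω)) (fun ω x => Γ x ω) μ) :
    μ {ω | Γ (C ω) ω = true} = p := by
  have h := measure_preimage_inter_setOf_mem_eq_sum hC hS (measurable_pi_lambda _ hΓ) hind
    MeasurableSet.univ (E := fun x => {f : X → Bool | f x = true}) measurableSet_apply_eq_true
  rw [Set.preimage_univ, Set.univ_inter] at h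
  refine h.trans ?_
  simp_rw [Set.inter_univ, hCunif, Set.preimage_ofPred_eq, hBer,
    Finset.sum_const, Finset.card_univ, hX, nsmul_eq_mul]
  push_cast
  rw [one_div, ← mul_assoc, ENNReal.mul_inv_cancel (by simp) (by simp), one_mul]

theorem lintegral_count_cond_bearer_comp [IsProbabilityMeasure μ] (hX : Fintype.card X = N + 1)
    (hC : Measurable C) (hS : Measurable S) (hΓ : ∀ x, Measurable (Γ x)) (hp0 : p ≠ 0)
    (hCunif : ∀ x, μ {ω | C ω = x} = 1 / (N + 1)) (hCS : IndepFun C S μ)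
    (hiid : iIndepFun Γ μ) (hBer : ∀ x, μ {ω | Γ x ω = true} = p)
    (hind : IndepFun (fun ω => (C ω, S ω)) (fun ω x => Γ x ω) μ) :
    ∫⁻ ω, ((∑ x, if Γ x ω then 1 else 0 : ℕ) : ℝ≥0∞) ∂μ[|{ω | Γ (C ω) ω = true}]
      = 1 + N * p := by
  have hA := measurableSet_bearer_comp hC hΓ
  have hAy := fun y => measure_preimage_inter_bearer_comp_inter_bearer hX hC hS hΓ hCunif hCS
    hiid hBer hind MeasurableSet.univ y
  simp only [Set.preimage_univ, Set.univ_inter, measure_univ, mul_one] at hAy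
  have hmuA := measure_bearer_comp hX hC hS hΓ hCunif hBer hind
  have hptop : p ≠ ⊤ := hmuA ▸ measure_ne_top μ _
  rw [lintegral_count_true_eq_sum _ hΓ]
  simp_rw [cond_apply hA, hmuA, hAy, Finset.sum_const, Finset.card_univ, hX, nsmul_eq_mul]
  push_cast
  calc ((N : ℝ≥0∞) + 1) * (p⁻¹ * (((N : ℝ≥0∞) + 1)⁻¹ * (p + N * (p * p))))
      = ((N : ℝ≥0∞) + 1) * (((N : ℝ≥0∞) + 1)⁻¹ * (p⁻¹ * (p * (1 + N * p)))) := by ring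
    _ = 1 + N * p := by
      rw [ENNReal.inv_mul_cancel_left hp0 hptop, ENNReal.mul_inv_cancel_left (by simp) (by simp)]

theorem cond_culprit_eq_suspect_eq_inv [IsFiniteMeasure μ] (hX : Fintype.card X = N + 1)
    (hC : Measurable C) (hS : Measurable S) (hΓ : ∀ x, Measurable (Γ x))
    (hCunif : ∀ x, μ {ω | C ω = x} = 1 / (N + 1)) (hCS : IndepFun C S μ)
    (hiid : iIndepFun Γ μ) (hBer : ∀ x, μ {ω | Γ x ω = true} = p)
    (hind : IndepFun (fun ω => (C ω, S ω)) (fun ω x => Γ x ω) μ) (s : X)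
    (hpos : μ ({ω | S ω = s} ∩ {ω | Γ (C ω) ω = true} ∩ {ω | Γ s ω = true}) ≠ 0) :
    μ[|{ω | S ω = s} ∩ {ω | Γ (C ω) ω = true} ∩ {ω | Γ s ω = true}] {ω | C ω = s}
      = (1 + N * p)⁻¹ := by
  set B := {ω | S ω = s} ∩ {ω | Γ (C ω) ω = true} ∩ {ω | Γ s ω = true}
  have hB : MeasurableSet B := ((hS (measurableSet_singleton s)).inter
    (measurableSet_bearer_comp hC hΓ)).inter (hΓ s (measurableSet_singleton true))
  set k := ((N : ℝ≥0∞) + 1)⁻¹ * μ (S ⁻¹' {s}) * p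
  have hden : μ B = k * (1 + N * p) := by
    refine (measure_preimage_inter_bearer_comp_inter_bearer hX hC hS hΓ hCunif hCS hiid hBer hind
      (measurableSet_singleton s) s).trans ?_
    ring
  have hnum : μ (B ∩ {ω | C ω = s}) = k := by
    have hBC : B ∩ {ω | C ω = s}
        = {ω | C ω = s} ∩ S ⁻¹' {s} ∩ (fun ω x => Γ x ω) ⁻¹' {f | f s = true} := by
      ext ω
      simp only [B, Set.mem_inter_iff, Set.mem_ofPred_eq, Set.mem_preimage, Set.mem_singleton_iff]
      constructor
      · rintro ⟨⟨⟨hSs, -⟩, hΓs⟩, hCs⟩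
        exact ⟨⟨hCs, hSs⟩, hΓs⟩
      · rintro ⟨⟨hCs, hSs⟩, hΓs⟩
        exact ⟨⟨⟨hSs, hCs ▸ hΓs⟩, hΓs⟩, hCs⟩
    rw [hBC, measure_fiber_inter_preimage_eq_mul hind s (measurableSet_singleton s)
      (measurableSet_apply_eq_true s),
      measure_fiber_eq_of_uniform hCunif hCS s (measurableSet_singleton s)]
    exact congrArg _ (hBer s)
  have hk0 : k ≠ 0 := fun h => hpos (by rw [hden, h, zero_mul])
  have hktop : k ≠ ⊤ := ENNReal.mul_ne_top (ENNReal.mul_ne_top (by simp) (measure_ne_top μ _))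
    (hBer s ▸ measure_ne_top μ _)
  rw [cond_apply hB, hden, hnum, ENNReal.mul_inv (.inl hk0) (.inl hktop), mul_right_comm,
    ENNReal.inv_mul_cancel hk0 hktop, one_mul]

end IslandModel

theorem island_expected_bearers_given_I_general
    {Ω : Type*} [MeasurableSpace Ω] (μ : Measure Ω) [IsProbabilityMeasure μ]
    {X : Type*} [Fintype X] [MeasurableSpace X] [MeasurableSingletonClass X]
    (N : ℕ) (hX : Fintype.card X = N + 1)
    (C S : Ω → X) (hC : Measurable C) (hS : Measurable S)
    (Γ : X → Ω → Bool) (hΓ : ∀ x, Measurable (Γ x))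
    (p : ℝ≥0∞) (hp0 : p ≠ 0)
    (hCunif : ∀ x : X, μ {ω | C ω = x} = 1 / (N + 1))
    (hCS : IndepFun C S μ)
    (hiid : iIndepFun Γ μ)
    (hBer : ∀ x, μ {ω | Γ x ω = true} = p)
    (hind : IndepFun (fun ω => (C ω, S ω)) (fun ω x => Γ x ω) μ)
    (U : Ω → ℕ) (hU : ∀ ω, U ω = ∑ x : X, if Γ x ω then 1 else 0)
    (s : X)
    (hpos : μ ({ω | S ω = s} ∩ {ω | Γ (C ω) ω = true} ∩ {ω | Γ s ω = true}) ≠ 0) :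
    (∫⁻ ω, (U ω : ℝ≥0∞) ∂(μ[|{ω | Γ (C ω) ω = true}])) = 1 + N * p ∧
    μ[|{ω | S ω = s} ∩ {ω | Γ (C ω) ω = true} ∩ {ω | Γ s ω = true}] {ω | C ω = s}
      = (∫⁻ ω, (U ω : ℝ≥0∞) ∂(μ[|{ω | Γ (C ω) ω = true}]))⁻¹ := by
  have hexp : ∫⁻ ω, (U ω : ℝ≥0∞) ∂(μ[|{ω | Γ (C ω) ω = true}]) = 1 + N * p := by
    simp only [hU]
    exact lintegral_count_cond_bearer_comp hX hC hS hΓ hp0 hCunif hCS hiid hBer hind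
  rw [hexp]
  exact ⟨rfl, cond_culprit_eq_suspect_eq_inv hX hC hS hΓ hCunif hCS hiid hBer hind s hpos⟩

/-- `E[U | Γ_C = 1] = 1 + N p`, and the posterior probability of guilt is its inverse. -/
theorem island_expected_bearers_given_I
    {Ω : Type*} [MeasurableSpace Ω] (μ : Measure Ω) [IsProbabilityMeasure μ]
    {X : Type*} [Fintype X] [MeasurableSpace X] [MeasurableSingletonClass X]
    (N : ℕ) (hX : Fintype.card X = N + 1)
    (C S : Ω → X) (hC : Measurable C) (hS : Measurable S)
    (Γ : X → Ω → Bool) (hΓ : ∀ x, Measurable (Γ x))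
    (p : ℝ≥0∞) (hp0 : p ≠ 0) (hp1 : p ≤ 1)
    (hCunif : ∀ x : X, μ {ω | C ω = x} = 1 / (N + 1))
    (hCS : IndepFun C S μ)
    (hiid : iIndepFun Γ μ)
    (hBer : ∀ x, μ {ω | Γ x ω = true} = p)
    (hind : IndepFun (fun ω => (C ω, S ω)) (fun ω x => Γ x ω) μ)
    (U : Ω → ℕ) (hU : ∀ ω, U ω = ∑ x : X, if Γ x ω then 1 else 0)
    (s : X)
    (hpos : μ ({ω | S ω = s} ∩ {ω | Γ (C ω) ω = true} ∩ {ω | Γ s ω = true}) ≠ 0) :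
    (∫⁻ ω, (U ω : ℝ≥0∞) ∂(μ[|{ω | Γ (C ω) ω = true}])) = 1 + N * p ∧
    μ[|{ω | S ω = s} ∩ {ω | Γ (C ω) ω = true} ∩ {ω | Γ s ω = true}] {ω | C ω = s}
      = (∫⁻ ω, (U ω : ℝ≥0∞) ∂(μ[|{ω | Γ (C ω) ω = true}]))⁻¹ :=
  island_expected_bearers_given_I_general μ N hX C S hC hS Γ hΓ p hp0 hCunif hCS hiid hBer hind U hU
    s hpos
end

section
/- Expected inverse number of Γ-bearers after the match: in the classical island model, E[U^{-1} | Γ_C=1, Γ_S=1, S=s] = 1/(1+Np), hence P(C=s | S=s, Γ_C=1, Γ_s=1) = E[U^{-1} | Γ_C=1, Γ_S=1, S=s]. -/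
open MeasureTheory ProbabilityTheory
open scoped ENNReal

/-!
Write `A = {S = s, Γ_C = 1, Γ_s = 1}`. Splitting over the value `c` of `C` and using that `(C, S)`
is independent of `Γ`, for every `f` we get
`∫_A f(C, Γ) = P(S = s)/(N+1) · ∑_c E[Γ_c Γ_s f(c, Γ)]`.
For `f = 1/U` the sum collapses, since `∑_c Γ_c Γ_s / U = Γ_s`, and gives `p`;
for `f = 1` it is `p + N p²`; for `f = 1{c = s}` it is `p`.
Both conditional quantities are therefore `p / (p + N p²) = 1/(1 + N p)`.
-/

namespace MeasureTheory

variable {Ω : Type*} [MeasurableSpace Ω] {μ : Measure Ω}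

theorem lintegral_ite_one {P : Ω → Prop} [DecidablePred P] (hP : MeasurableSet {ω | P ω}) :
    ∫⁻ ω, (if P ω then 1 else 0) ∂μ = μ {ω | P ω} := by
  rw [← lintegral_indicator_one hP]
  simp only [Set.indicator_apply, Set.mem_ofPred_eq, Pi.one_apply]

end MeasureTheory

namespace ProbabilityTheory

variable {Ω α β : Type*} [MeasurableSpace Ω] {μ : Measure Ω}

theorem lintegral_comp_eq_sum_of_indepFun [Fintype α] [MeasurableSpace α]
    [MeasurableSingletonClass α] [MeasurableSpace β] {T : Ω → α} {G : Ω → β}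
    (hT : Measurable T) (hG : Measurable G) (hTG : IndepFun T G μ)
    {F : α → β → ℝ≥0∞} (hF : ∀ a, Measurable (F a)) :
    ∫⁻ ω, F (T ω) (G ω) ∂μ = ∑ a, μ (T ⁻¹' {a}) * ∫⁻ ω, F a (G ω) ∂μ := by
  have hsplit (ω : Ω) :
      F (T ω) (G ω) = ∑ a, ({a} : Set α).indicator 1 (T ω) * F a (G ω) := by
    rw [Finset.sum_eq_single (T ω) (fun a _ ha => by simp [Ne.symm ha]) (by simp)]
    simp
  have hmeas_ind (a : α) : Measurable (({a} : Set α).indicator (1 : α → ℝ≥0∞)) :=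
    measurable_one.indicator (measurableSet_singleton a)
  simp_rw [hsplit]
  rw [lintegral_finsetSum (f := fun a ω => ({a} : Set α).indicator 1 (T ω) * F a (G ω)) _
    fun a _ => ((hmeas_ind a).comp hT).mul ((hF a).comp hG)]
  refine Finset.sum_congr rfl fun a _ => ?_
  rw [← lintegral_indicator_one (hT (measurableSet_singleton a))]
  exact lintegral_mul_eq_lintegral_mul_lintegral_of_indepFun ((hmeas_ind a).comp hT)
    ((hF a).comp hG) (hTG.comp (hmeas_ind a) (hF a))

theorem lintegral_cond (s : Set Ω) (f : Ω → ℝ≥0∞) :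
    ∫⁻ ω, f ω ∂μ[|s] = (μ s)⁻¹ * ∫⁻ ω in s, f ω ∂μ := by
  rw [cond, lintegral_smul_measure, smul_eq_mul]

end ProbabilityTheory

section IslandModel

variable {Ω X : Type*} [MeasurableSpace Ω] {μ : Measure Ω}

def matchEvent (C S : Ω → X) (Γ : X → Ω → Bool) (s : X) : Set Ω :=
  {ω | S ω = s} ∩ {ω | Γ (C ω) ω = true} ∩ {ω | Γ s ω = true}

variable {Γ : X → Ω → Bool} {p : ℝ≥0∞}

theorem measure_bearer_pair_of_ne (hiid : iIndepFun Γ μ)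
    (hBer : ∀ x, μ {ω | Γ x ω = true} = p) {c s : X} (hcs : c ≠ s) :
    μ {ω | Γ c ω = true ∧ Γ s ω = true} = p * p := by
  change μ (Γ c ⁻¹' {true} ∩ Γ s ⁻¹' {true}) = p * p
  rw [(hiid.indepFun hcs).measure_inter_preimage_eq_mul _ _ (measurableSet_singleton true)
    (measurableSet_singleton true)]
  exact congrArg₂ (· * ·) (hBer c) (hBer s)

variable [Fintype X]

def numBearers (γ : X → Bool) : ℕ := ∑ x, if γ x then 1 else 0

theorem sum_ite_inv_numBearers (γ : X → Bool) (s : X) :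
    ∑ c, (if γ c ∧ γ s then (numBearers γ : ℝ≥0∞)⁻¹ else 0)
      = if γ s then 1 else 0 := by
  by_cases hs : γ s
  · have hpos : numBearers γ ≠ 0 := by
      simp only [numBearers, ne_eq, Finset.sum_eq_zero_iff, Finset.mem_univ, true_implies,
        not_forall]
      exact ⟨s, by simp [hs]⟩
    simp only [hs, and_true, if_true]
    calc ∑ c, (if γ c then (numBearers γ : ℝ≥0∞)⁻¹ else 0)
        = (numBearers γ : ℝ≥0∞) * (numBearers γ : ℝ≥0∞)⁻¹ := by
          simp_rw [numBearers, Nat.cast_sum, Nat.cast_ite, Nat.cast_one, Nat.cast_zero,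
            Finset.sum_mul, boole_mul]
      _ = 1 := ENNReal.mul_inv_cancel (by exact_mod_cast hpos) (ENNReal.natCast_ne_top _)
  · simp [hs]

theorem sum_lintegral_bearer_pair (hΓ : ∀ x, Measurable (Γ x)) (hiid : iIndepFun Γ μ)
    (hBer : ∀ x, μ {ω | Γ x ω = true} = p) {N : ℕ} (hX : Fintype.card X = N + 1) (s : X) :
    ∑ c, ∫⁻ ω, (if Γ c ω ∧ Γ s ω then 1 else 0) ∂μ = p * (1 + N * p) := by
  classical
  have hpair (c : X) : ∫⁻ ω, (if Γ c ω ∧ Γ s ω then 1 else 0) ∂μ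
      = μ {ω | Γ c ω = true ∧ Γ s ω = true} :=
    lintegral_ite_one (((hΓ c) (measurableSet_singleton true)).inter
      ((hΓ s) (measurableSet_singleton true)))
  simp_rw [hpair]
  rw [← Finset.add_sum_erase _ _ (Finset.mem_univ s), Finset.sum_congr rfl fun c hc =>
      measure_bearer_pair_of_ne hiid hBer (Finset.ne_of_mem_erase hc), Finset.sum_const,
    Finset.card_erase_of_mem (Finset.mem_univ s), Finset.card_univ, hX]
  simp [hBer s]
  ring

theorem sum_lintegral_bearer_pair_ite_eq [DecidableEq X] (hΓ : ∀ x, Measurable (Γ x))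
    (hBer : ∀ x, μ {ω | Γ x ω = true} = p) (s : X) :
    ∑ c, ∫⁻ ω, (if Γ c ω ∧ Γ s ω then (if c = s then 1 else 0) else 0) ∂μ = p := by
  rw [Finset.sum_eq_single s (fun c _ hc => by simp [hc]) (by simp)]
  simp only [and_self, ↓reduceIte]
  rw [lintegral_ite_one (P := fun ω => Γ s ω = true) ((hΓ s) (measurableSet_singleton true)),
    hBer]

theorem sum_lintegral_inv_numBearers (hΓ : ∀ x, Measurable (Γ x))
    (hBer : ∀ x, μ {ω | Γ x ω = true} = p) (s : X) :
    ∑ c, ∫⁻ ω, (if Γ c ω ∧ Γ s ω then (numBearers (fun x => Γ x ω) : ℝ≥0∞)⁻¹ else 0) ∂μ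
      = p := by
  let f (c : X) (γ : X → Bool) : ℝ≥0∞ :=
    if γ c ∧ γ s then (numBearers γ : ℝ≥0∞)⁻¹ else 0
  rw [← lintegral_finsetSum (f := fun c ω => f c fun x => Γ x ω) _ fun c _ =>
      (measurable_of_countable (f c)).comp (measurable_pi_lambda _ hΓ),
    lintegral_congr fun ω => sum_ite_inv_numBearers (fun x => Γ x ω) s,
    lintegral_ite_one (P := fun ω => Γ s ω = true) ((hΓ s) (measurableSet_singleton true)),
    hBer]

variable [MeasurableSpace X] [MeasurableSingletonClass X]

theorem measurableSet_matchEvent {C S : Ω → X} (hC : Measurable C) (hS : Measurable S)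
    (hΓ : ∀ x, Measurable (Γ x)) (s : X) : MeasurableSet (matchEvent C S Γ s) := by
  have hΓC : Measurable fun ω => Γ (C ω) ω :=
    (measurable_of_countable fun q : (X → Bool) × X => q.1 q.2).comp
      ((measurable_pi_lambda _ hΓ).prodMk hC)
  exact ((hS (measurableSet_singleton s)).inter (hΓC (measurableSet_singleton true))).inter
    ((hΓ s) (measurableSet_singleton true))

theorem setLIntegral_matchEvent {C S : Ω → X} (hC : Measurable C) (hS : Measurable S)
    (hΓ : ∀ x, Measurable (Γ x)) {q : ℝ≥0∞} (hCunif : ∀ x, μ {ω | C ω = x} = q)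
    (hCS : IndepFun C S μ) (hind : IndepFun (fun ω => (C ω, S ω)) (fun ω x => Γ x ω) μ)
    (s : X) (h : X → (X → Bool) → ℝ≥0∞) :
    ∫⁻ ω in matchEvent C S Γ s, h (C ω) (fun x => Γ x ω) ∂μ
      = q * μ {ω | S ω = s} *
          ∑ c, ∫⁻ ω, (if Γ c ω ∧ Γ s ω then h c (fun x => Γ x ω) else 0) ∂μ := by
  classical
  let F : X × X → (X → Bool) → ℝ≥0∞ := fun cs γ =>
    if cs.2 = s ∧ γ cs.1 ∧ γ s then h cs.1 γ else 0
  have hF (ω : Ω) : (matchEvent C S Γ s).indicator (fun ω => h (C ω) (fun x => Γ x ω)) ω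
      = F (C ω, S ω) (fun x => Γ x ω) := by
    simp [F, matchEvent, Set.indicator_apply, and_assoc]
  rw [← lintegral_indicator (measurableSet_matchEvent hC hS hΓ s), lintegral_congr hF,
    lintegral_comp_eq_sum_of_indepFun (hC.prodMk hS) (measurable_pi_lambda _ hΓ) hind
      fun _ => measurable_of_countable _, Fintype.sum_prod_type, Finset.mul_sum]
  refine Finset.sum_congr rfl fun c _ => ?_
  rw [Finset.sum_eq_single s (fun s' _ hs' => by simp [F, hs']) (by simp)]
  have hpre : (fun ω => (C ω, S ω)) ⁻¹' {(c, s)} = C ⁻¹' {c} ∩ S ⁻¹' {s} := by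
    ext; simp
  rw [hpre, hCS.measure_inter_preimage_eq_mul _ _ (measurableSet_singleton c)
    (measurableSet_singleton s)]
  simp [F, ← hCunif c]
  rfl

end IslandModel

theorem island_expected_inverse_bearers_general
    {Ω : Type*} [MeasurableSpace Ω] (μ : Measure Ω) [IsProbabilityMeasure μ]
    {X : Type*} [Fintype X] [MeasurableSpace X] [MeasurableSingletonClass X]
    (N : ℕ) (hX : Fintype.card X = N + 1)
    (C S : Ω → X) (hC : Measurable C) (hS : Measurable S)
    (Γ : X → Ω → Bool) (hΓ : ∀ x, Measurable (Γ x))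
    (p : ℝ≥0∞)
    (hCunif : ∀ x : X, μ {ω | C ω = x} = 1 / (N + 1))
    (hCS : IndepFun C S μ)
    (hiid : iIndepFun Γ μ)
    (hBer : ∀ x, μ {ω | Γ x ω = true} = p)
    (hind : IndepFun (fun ω => (C ω, S ω)) (fun ω x => Γ x ω) μ)
    (U : Ω → ℕ) (hU : ∀ ω, U ω = ∑ x : X, if Γ x ω then 1 else 0)
    (s : X)
    (hpos : μ ({ω | S ω = s} ∩ {ω | Γ (C ω) ω = true} ∩ {ω | Γ s ω = true}) ≠ 0) :
    (∫⁻ ω, (U ω : ℝ≥0∞)⁻¹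
        ∂(μ[|{ω | S ω = s} ∩ {ω | Γ (C ω) ω = true} ∩ {ω | Γ s ω = true}]))
      = 1 / (1 + N * p) ∧
    μ[|{ω | S ω = s} ∩ {ω | Γ (C ω) ω = true} ∩ {ω | Γ s ω = true}] {ω | C ω = s}
      = ∫⁻ ω, (U ω : ℝ≥0∞)⁻¹
          ∂(μ[|{ω | S ω = s} ∩ {ω | Γ (C ω) ω = true} ∩ {ω | Γ s ω = true}]) := by
  classical
  show ∫⁻ ω, _ ∂μ[|matchEvent C S Γ s] = _ ∧
    μ[|matchEvent C S Γ s] _ = ∫⁻ ω, _ ∂μ[|matchEvent C S Γ s]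
  set A := matchEvent C S Γ s
  set k := 1 / (N + 1) * μ {ω | S ω = s} * p
  have hmass : μ A = k * (1 + N * p) := by
    have h := setLIntegral_matchEvent hC hS hΓ hCunif hCS hind s fun _ _ => 1
    rwa [setLIntegral_one, sum_lintegral_bearer_pair hΓ hiid hBer hX s, ← mul_assoc] at h
  have hinv : ∫⁻ ω in A, (U ω : ℝ≥0∞)⁻¹ ∂μ = k := by
    have h := setLIntegral_matchEvent hC hS hΓ hCunif hCS hind s
      fun _ γ => (numBearers γ : ℝ≥0∞)⁻¹
    rw [sum_lintegral_inv_numBearers hΓ hBer] at h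
    simp only [hU]
    exact h
  have hguilt : ∫⁻ ω in A, (if C ω = s then 1 else 0) ∂μ = k := by
    have h := setLIntegral_matchEvent hC hS hΓ hCunif hCS hind s
      fun c _ => if c = s then 1 else 0
    rwa [sum_lintegral_bearer_pair_ite_eq hΓ hBer] at h
  have hk0 : k ≠ 0 := left_ne_zero_of_mul (hmass ▸ hpos)
  have hk_top : k ≠ ∞ := fun hk => measure_ne_top μ A (by
    rw [hmass, hk, ENNReal.top_mul (by simp)])
  have hcond (f : Ω → ℝ≥0∞) (hf : ∫⁻ ω in A, f ω ∂μ = k) :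
      ∫⁻ ω, f ω ∂μ[|A] = 1 / (1 + N * p) := by
    rw [lintegral_cond, hf, hmass, ENNReal.mul_inv (Or.inl hk0) (Or.inl hk_top),
      mul_right_comm, ENNReal.inv_mul_cancel hk0 hk_top, one_mul, one_div]
  refine ⟨hcond _ hinv, ?_⟩
  rw [hcond _ hinv, ← lintegral_ite_one (P := fun ω => C ω = s)
    (hC (measurableSet_singleton s)), hcond _ hguilt]

/-- `E[U⁻¹ | I, E, S=s] = 1/(1+Np)`, and the posterior probability of guilt equals
this expected inverse number of `Γ`-bearers. -/
theorem island_expected_inverse_bearers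
    {Ω : Type*} [MeasurableSpace Ω] (μ : Measure Ω) [IsProbabilityMeasure μ]
    {X : Type*} [Fintype X] [MeasurableSpace X] [MeasurableSingletonClass X]
    (N : ℕ) (hX : Fintype.card X = N + 1)
    (C S : Ω → X) (hC : Measurable C) (hS : Measurable S)
    (Γ : X → Ω → Bool) (hΓ : ∀ x, Measurable (Γ x))
    (p : ℝ≥0∞) (hp0 : p ≠ 0) (hp1 : p ≤ 1)
    (hCunif : ∀ x : X, μ {ω | C ω = x} = 1 / (N + 1))
    (hCS : IndepFun C S μ)
    (hiid : iIndepFun Γ μ)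
    (hBer : ∀ x, μ {ω | Γ x ω = true} = p)
    (hind : IndepFun (fun ω => (C ω, S ω)) (fun ω x => Γ x ω) μ)
    (U : Ω → ℕ) (hU : ∀ ω, U ω = ∑ x : X, if Γ x ω then 1 else 0)
    (s : X)
    (hpos : μ ({ω | S ω = s} ∩ {ω | Γ (C ω) ω = true} ∩ {ω | Γ s ω = true}) ≠ 0) :
    (∫⁻ ω, (U ω : ℝ≥0∞)⁻¹
        ∂(μ[|{ω | S ω = s} ∩ {ω | Γ (C ω) ω = true} ∩ {ω | Γ s ω = true}]))
      = 1 / (1 + N * p) ∧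
    μ[|{ω | S ω = s} ∩ {ω | Γ (C ω) ω = true} ∩ {ω | Γ s ω = true}] {ω | C ω = s}
      = ∫⁻ ω, (U ω : ℝ≥0∞)⁻¹
          ∂(μ[|{ω | S ω = s} ∩ {ω | Γ (C ω) ω = true} ∩ {ω | Γ s ω = true}]) :=
  island_expected_inverse_bearers_general μ N hX C S hC hS Γ hΓ p hCunif hCS hiid hBer hind U hU s
    hpos
end

section
/- Posterior odds with Γ-correlations: if S and C are independent and c_{x,y} := P(Γ_x=1 | Γ_y=1), then P(C=s | S=s, Γ_C=1, Γ_s=1) / P(C≠s | S=s, Γ_C=1, Γ_s=1) = P(C=s | Γ_C=1) / Σ_{y≠s} c_{s,y} P(C=y | Γ_C=1). -/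
open MeasureTheory ProbabilityTheory
open scoped ENNReal

/-- Posterior odds with `Γ`-correlations: if `S` and `C` are independent and
`c x y = P(Γ_x = 1 | Γ_y = 1)`, then the posterior odds are
`P(C=s | I) / Σ_{y≠s} c_{s,y} P(C=y | I)`. -/
theorem island_correlated_odds
    {Ω : Type*} [MeasurableSpace Ω] (μ : Measure Ω) [IsProbabilityMeasure μ]
    {X : Type*} [Fintype X] [DecidableEq X] [MeasurableSpace X] [MeasurableSingletonClass X]
    (C S : Ω → X) (hC : Measurable C) (hS : Measurable S)
    (Γ : X → Ω → Bool) (hΓ : ∀ x, Measurable (Γ x))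
    (hCS : IndepFun C S μ)
    (hind : IndepFun (fun ω => (C ω, S ω)) (fun ω x => Γ x ω) μ)
    (hΓpos : ∀ y, μ {ω | Γ y ω = true} ≠ 0)
    (c : X → X → ℝ≥0∞)
    (hc : ∀ x y, c x y = μ[|{ω | Γ y ω = true}] {ω | Γ x ω = true})
    (s : X)
    (hposI : μ {ω | Γ (C ω) ω = true} ≠ 0)
    (hpos : μ ({ω | S ω = s} ∩ {ω | Γ (C ω) ω = true} ∩ {ω | Γ s ω = true}) ≠ 0) :
    μ[|{ω | S ω = s} ∩ {ω | Γ (C ω) ω = true} ∩ {ω | Γ s ω = true}] {ω | C ω = s}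
      / μ[|{ω | S ω = s} ∩ {ω | Γ (C ω) ω = true} ∩ {ω | Γ s ω = true}] {ω | C ω ≠ s}
      = μ[|{ω | Γ (C ω) ω = true}] {ω | C ω = s}
        / ∑ y ∈ Finset.univ.erase s, c s y * μ[|{ω | Γ (C ω) ω = true}] {ω | C ω = y} := by
  classical
  set A : X → Set Ω := fun y => {ω | C ω = y} with hA
  set B : Set Ω := {ω | S ω = s} with hB
  set J : X → Set Ω := fun y => {ω | Γ y ω = true} with hJ
  set I : Set Ω := {ω | Γ (C ω) ω = true} with hI
  have hAm : ∀ y, MeasurableSet (A y) := fun y => hC (measurableSet_singleton y)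
  have hBm : MeasurableSet B := hS (measurableSet_singleton s)
  have hJm : ∀ y, MeasurableSet (J y) := fun y => (hΓ y) (measurableSet_singleton true)
  have hIeq : I = ⋃ y, (A y ∩ J y) := by
    ext ω
    simp only [hI, hA, hJ, Set.mem_setOf_eq, Set.mem_iUnion, Set.mem_inter_iff]
    constructor
    · intro h; exact ⟨C ω, rfl, h⟩
    · rintro ⟨y, rfl, h⟩; exact h
  have hIm : MeasurableSet I := by
    rw [hIeq]; exact MeasurableSet.iUnion fun y => (hAm y).inter (hJm y)
  -- joint distributions via independence
  have hUm : ∀ y, MeasurableSet {f : X → Bool | f y = true} := by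
    intro y
    show MeasurableSet ((fun f : X → Bool => f y) ⁻¹' {true})
    exact (measurable_pi_apply y) (measurableSet_singleton true)
  have key2 : ∀ y : X, μ (A y ∩ B ∩ (J y ∩ J s)) = μ (A y) * μ B * μ (J y ∩ J s) := by
    intro y
    have h1 := hind.measure_inter_preimage_eq_mul (s := ({y} : Set X) ×ˢ ({s} : Set X))
      (t := {f : X → Bool | f y = true} ∩ {f | f s = true})
      ((measurableSet_singleton y).prod (measurableSet_singleton s))
      ((hUm y).inter (hUm s))
    have h2 := hCS.measure_inter_preimage_eq_mul (s := ({y} : Set X)) (t := ({s} : Set X))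
      (measurableSet_singleton y) (measurableSet_singleton s)
    have e1 : (fun ω => (C ω, S ω)) ⁻¹' (({y} : Set X) ×ˢ ({s} : Set X)) = A y ∩ B := by
      ext ω; simp [hA, hB, Set.mem_prod, eq_comm]
    have e2 : (fun ω x => Γ x ω) ⁻¹' ({f : X → Bool | f y = true} ∩ {f | f s = true})
        = J y ∩ J s := by ext ω; simp [hJ]
    have e3 : C ⁻¹' ({y} : Set X) = A y := by ext ω; simp [hA, eq_comm]
    have e4 : S ⁻¹' ({s} : Set X) = B := by ext ω; simp [hB, eq_comm]
    rw [e1, e2] at h1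
    rw [e3, e4] at h2
    rw [h1, h2]
  have key1 : ∀ y : X, μ (A y ∩ J y) = μ (A y) * μ (J y) := by
    intro y
    have h1 := hind.measure_inter_preimage_eq_mul (s := ({y} : Set X) ×ˢ (Set.univ : Set X))
      (t := {f : X → Bool | f y = true})
      ((measurableSet_singleton y).prod MeasurableSet.univ) (hUm y)
    have e1 : (fun ω => (C ω, S ω)) ⁻¹' (({y} : Set X) ×ˢ (Set.univ : Set X)) = A y := by
      ext ω; simp [hA, Set.mem_prod, eq_comm]
    have e2 : (fun ω x => Γ x ω) ⁻¹' {f : X → Bool | f y = true} = J y := by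
      ext ω; simp [hJ]
    rw [e1, e2] at h1
    exact h1
  -- intersecting with I replaces Γ_C by Γ_y
  have hAI : ∀ y : X, A y ∩ I = A y ∩ J y := by
    intro y
    ext ω
    simp only [hA, hI, hJ, Set.mem_inter_iff, Set.mem_setOf_eq]
    constructor
    · rintro ⟨h1, h2⟩; rw [h1] at h2; exact ⟨h1, h2⟩
    · rintro ⟨h1, h2⟩; rw [h1]; exact ⟨rfl, h2⟩
  set E : Set Ω := B ∩ I ∩ J s with hE
  have hEm : MeasurableSet E := (hBm.inter hIm).inter (hJm s)
  have hAE : ∀ y : X, A y ∩ E = A y ∩ B ∩ (J y ∩ J s) := by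
    intro y
    have : A y ∩ E = (A y ∩ I) ∩ (B ∩ J s) := by
      rw [hE]; ext ω; simp only [Set.mem_inter_iff]; tauto
    rw [this, hAI y]; ext ω; simp only [Set.mem_inter_iff]; tauto
  -- basic finiteness and positivity facts
  have hfin : ∀ T : Set Ω, μ T ≠ ∞ := fun T => measure_ne_top μ T
  have hBpos : μ B ≠ 0 := by
    intro h
    exact hpos (measure_mono_null (by rw [hE]; exact fun ω hω => hω.1.1) h)
  -- the two unconditional quantities
  set n : ℝ≥0∞ := μ (A s) * μ (J s) with hn
  set d : ℝ≥0∞ := ∑ y ∈ Finset.univ.erase s, μ (A y) * μ (J y ∩ J s) with hd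
  -- numerator of LHS
  have hJss : J s ∩ J s = J s := Set.inter_self _
  have hnum : μ (E ∩ A s) = μ B * n := by
    rw [Set.inter_comm, hAE s, key2 s, hJss, hn]; ring
  -- denominator of LHS : decompose over y ≠ s
  have hsplit : E ∩ {ω | C ω ≠ s} = ⋃ y ∈ Finset.univ.erase s, (A y ∩ E) := by
    ext ω
    simp only [Set.mem_inter_iff, Set.mem_iUnion, Finset.mem_erase, Set.mem_setOf_eq, hA]
    constructor
    · rintro ⟨hE', hne⟩; exact ⟨C ω, ⟨hne, Finset.mem_univ _⟩, rfl, hE'⟩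
    · rintro ⟨y, ⟨hy, -⟩, rfl, hE'⟩; exact ⟨hE', hy⟩
  have hden : μ (E ∩ {ω | C ω ≠ s}) = μ B * d := by
    rw [hsplit, measure_biUnion_finset ?_ (fun y _ => (hAm y).inter hEm)]
    · rw [hd, Finset.mul_sum]
      refine Finset.sum_congr rfl fun y _ => ?_
      rw [hAE y, key2 y]; ring
    · intro y _ z _ hyz
      refine Set.disjoint_left.2 fun ω hω hω' => hyz ?_
      have h1 : C ω = y := hω.1
      have h2 : C ω = z := hω'.1
      exact h1.symm.trans h2
  -- LHS equals n / d
  have hLHS : μ[|E] {ω | C ω = s} / μ[|E] {ω | C ω ≠ s} = n / d := by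
    rw [cond_apply hEm, cond_apply hEm]
    have h1 : E ∩ {ω | C ω = s} = E ∩ A s := rfl
    rw [h1, hnum, hden,
      ENNReal.mul_div_mul_left _ _ (ENNReal.inv_ne_zero.2 (hfin E))
        (ENNReal.inv_ne_top.2 hpos),
      ENNReal.mul_div_mul_left _ _ hBpos (hfin B)]
  -- RHS numerator
  have hRn : μ[|I] {ω | C ω = s} = (μ I)⁻¹ * n := by
    rw [cond_apply hIm]
    congr 1
    rw [Set.inter_comm]
    have : ({ω | C ω = s} : Set Ω) = A s := rfl
    rw [this, hAI s, key1 s, hn]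
  -- RHS denominator terms
  have hRt : ∀ y : X, c s y * μ[|I] {ω | C ω = y}
      = (μ I)⁻¹ * (μ (A y) * μ (J y ∩ J s)) := by
    intro y
    have hcy : c s y = (μ (J y))⁻¹ * μ (J y ∩ J s) := by
      rw [hc s y, cond_apply (hJm y)]
    have hcond : μ[|I] {ω | C ω = y} = (μ I)⁻¹ * (μ (A y) * μ (J y)) := by
      rw [cond_apply hIm]
      congr 1
      rw [Set.inter_comm]
      have : ({ω | C ω = y} : Set Ω) = A y := rfl
      rw [this, hAI y, key1 y]
    rw [hcy, hcond]
    have hcancel : (μ (J y))⁻¹ * μ (J y) = 1 := ENNReal.inv_mul_cancel (hΓpos y) (hfin _)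
    calc (μ (J y))⁻¹ * μ (J y ∩ J s) * ((μ I)⁻¹ * (μ (A y) * μ (J y)))
        = ((μ (J y))⁻¹ * μ (J y)) * ((μ I)⁻¹ * (μ (A y) * μ (J y ∩ J s))) := by ring
      _ = (μ I)⁻¹ * (μ (A y) * μ (J y ∩ J s)) := by rw [hcancel, one_mul]
  have hRHS : μ[|I] {ω | C ω = s}
      / ∑ y ∈ Finset.univ.erase s, c s y * μ[|I] {ω | C ω = y} = n / d := by
    rw [hRn]
    have : ∑ y ∈ Finset.univ.erase s, c s y * μ[|I] {ω | C ω = y} = (μ I)⁻¹ * d := by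
      rw [hd, Finset.mul_sum]
      exact Finset.sum_congr rfl fun y _ => hRt y
    rw [this, ENNReal.mul_div_mul_left _ _ (ENNReal.inv_ne_zero.2 (hfin I))
      (ENNReal.inv_ne_top.2 hposI)]
  rw [hLHS, hRHS]
end

section
/- Two expressions for the posterior odds with correlated traits agree: under independence of S and C, P(C=s | Γ_C=1) / Σ_{y≠s} c_{s,y} P(C=y | Γ_C=1) = P(C=s) / Σ_{y≠s} c_{y,s} P(C=y), where c_{x,y} = P(Γ_x=1 | Γ_y=1). -/
open MeasureTheory ProbabilityTheory
open scoped ENNReal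

/-- The two expressions for the posterior odds with correlated traits agree:
`P(C=s | I) / Σ_{y≠s} c_{s,y} P(C=y | I) = P(C=s) / Σ_{y≠s} c_{y,s} P(C=y)`. -/
theorem island_correlated_odds_agree
    {Ω : Type*} [MeasurableSpace Ω] (μ : Measure Ω) [IsProbabilityMeasure μ]
    {X : Type*} [Fintype X] [DecidableEq X] [MeasurableSpace X] [MeasurableSingletonClass X]
    (C S : Ω → X) (hC : Measurable C) (hS : Measurable S)
    (Γ : X → Ω → Bool) (hΓ : ∀ x, Measurable (Γ x))
    (hCS : IndepFun C S μ)
    (hind : IndepFun (fun ω => (C ω, S ω)) (fun ω x => Γ x ω) μ)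
    (hΓpos : ∀ y, μ {ω | Γ y ω = true} ≠ 0)
    (c : X → X → ℝ≥0∞)
    (hc : ∀ x y, c x y = μ[|{ω | Γ y ω = true}] {ω | Γ x ω = true})
    (s : X)
    (hposI : μ {ω | Γ (C ω) ω = true} ≠ 0) :
    μ[|{ω | Γ (C ω) ω = true}] {ω | C ω = s}
        / ∑ y ∈ Finset.univ.erase s, c s y * μ[|{ω | Γ (C ω) ω = true}] {ω | C ω = y}
      = μ {ω | C ω = s}
        / ∑ y ∈ Finset.univ.erase s, c y s * μ {ω | C ω = y} := by
  classical
  set I : Set Ω := {ω | Γ (C ω) ω = true} with hI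
  -- measurability of pieces
  have hCy : ∀ y : X, MeasurableSet {ω | C ω = y} := fun y =>
    hC (measurableSet_singleton y)
  have hΓy : ∀ y : X, MeasurableSet {ω | Γ y ω = true} := fun y =>
    (hΓ y) (measurableSet_singleton true)
  have hIeq : I = ⋃ y : X, ({ω | C ω = y} ∩ {ω | Γ y ω = true}) := by
    ext ω
    simp only [hI, Set.mem_setOf_eq, Set.mem_iUnion, Set.mem_inter_iff]
    exact ⟨fun h => ⟨C ω, rfl, h⟩, fun ⟨y, hy, h⟩ => hy ▸ h⟩
  have hImeas : MeasurableSet I := by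
    rw [hIeq]; exact MeasurableSet.iUnion fun y => (hCy y).inter (hΓy y)
  -- independence of C and Γ y
  have hCG : ∀ y : X, IndepFun C (fun ω => Γ y ω) μ := fun y =>
    hind.comp measurable_fst (measurable_pi_apply y)
  -- key: μ ({C = y} ∩ I) = μ {C = y} * μ {Γ y = 1}
  have hkey : ∀ y : X, μ (I ∩ {ω | C ω = y}) = μ {ω | C ω = y} * μ {ω | Γ y ω = true} := by
    intro y
    have hset : I ∩ {ω | C ω = y} = C ⁻¹' {y} ∩ (fun ω => Γ y ω) ⁻¹' {true} := by
      ext ω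
      simp only [hI, Set.mem_setOf_eq, Set.mem_inter_iff, Set.mem_preimage,
        Set.mem_singleton_iff]
      constructor
      · rintro ⟨h1, h2⟩; exact ⟨h2, h2 ▸ h1⟩
      · rintro ⟨h1, h2⟩; exact ⟨h1 ▸ h2, h1⟩
    rw [hset, (hCG y).measure_inter_preimage_eq_mul _ _ (measurableSet_singleton y)
      (measurableSet_singleton true)]
    rfl
  have hTne : μ I ≠ ∞ := measure_ne_top μ I
  have hGne : ∀ y, μ {ω | Γ y ω = true} ≠ ∞ := fun y => measure_ne_top μ _
  have hcond : ∀ y : X, μ[|I] {ω | C ω = y}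
      = (μ I)⁻¹ * (μ {ω | C ω = y} * μ {ω | Γ y ω = true}) := by
    intro y
    rw [cond_apply hImeas, hkey]
  have hcval : ∀ x y : X, c x y
      = (μ {ω | Γ y ω = true})⁻¹ * μ ({ω | Γ x ω = true} ∩ {ω | Γ y ω = true}) := by
    intro x y
    rw [hc, cond_apply (hΓy y), Set.inter_comm]
  -- abbreviations
  set P : X → ℝ≥0∞ := fun y => μ {ω | C ω = y}
  set G : X → ℝ≥0∞ := fun y => μ {ω | Γ y ω = true}
  set A : X → X → ℝ≥0∞ := fun x y => μ ({ω | Γ x ω = true} ∩ {ω | Γ y ω = true})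
  have hGinv_ne_top : ∀ y, (G y)⁻¹ ≠ ∞ := fun y => ENNReal.inv_ne_top.2 (hΓpos y)
  have hGinv_ne_zero : ∀ y, (G y)⁻¹ ≠ 0 := fun y => ENNReal.inv_ne_zero.2 (hGne y)
  have hAsymm : ∀ x y, A x y = A y x := fun x y => by
    simp only [A]; rw [Set.inter_comm]
  -- compute each term of the LHS sum
  have hterm : ∀ y : X, c s y * μ[|I] {ω | C ω = y}
      = (μ I)⁻¹ * (A s y * P y) := by
    intro y
    rw [hcond y, hcval]
    have hg : (G y)⁻¹ * G y = 1 := ENNReal.inv_mul_cancel (hΓpos y) (hGne y)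
    calc (G y)⁻¹ * A s y * ((μ I)⁻¹ * (P y * G y))
        = (μ I)⁻¹ * (A s y * P y) * ((G y)⁻¹ * G y) := by ring
      _ = (μ I)⁻¹ * (A s y * P y) := by rw [hg, mul_one]
  have hLHS : μ[|I] {ω | C ω = s}
        / ∑ y ∈ Finset.univ.erase s, c s y * μ[|I] {ω | C ω = y}
      = (P s * G s) / ∑ y ∈ Finset.univ.erase s, A s y * P y := by
    rw [hcond s]
    rw [Finset.sum_congr rfl fun y _ => hterm y, ← Finset.mul_sum]
    exact ENNReal.mul_div_mul_left _ _ (ENNReal.inv_ne_zero.2 hTne)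
      (ENNReal.inv_ne_top.2 hposI)
  rw [hLHS]
  -- RHS
  have hterm2 : ∀ y : X, c y s * P y = (G s)⁻¹ * (A y s * P y) := by
    intro y
    rw [hcval]; ring
  rw [Finset.sum_congr rfl fun y _ => hterm2 y, ← Finset.mul_sum]
  have hB : (P s) / ((G s)⁻¹ * ∑ y ∈ Finset.univ.erase s, A y s * P y)
      = (P s * G s) / ∑ y ∈ Finset.univ.erase s, A y s * P y := by
    rw [div_eq_mul_inv, ENNReal.mul_inv (Or.inl (hGinv_ne_zero s)) (Or.inl (hGinv_ne_top s)),
      inv_inv, div_eq_mul_inv, mul_assoc]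
  rw [hB]
  congr 1
  exact Finset.sum_congr rfl fun y _ => by rw [hAsymm s y]
end

section
/- Heterogeneous population posterior odds: with X partitioned into subpopulations X_1,...,X_m of sizes N_i, P(C ∈ X_i) = β_i, C uniform on each subpopulation, Γ_x independent Bernoulli(p_{X(x)}), and S independent of C, the posterior odds for a suspect s in subpopulation with frequency p_s and size N_s equal 1 / (N_s Σ_i p_i (β_i/β_s) − p_s), equivalently (1/p_s) · α_s/(N_s − α_s) where α_s = p_s β_s / Σ_j p_j β_j. -/
open MeasureTheory ProbabilityTheory Finset
open scoped ENNReal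

/-!
Write `E = {S = s, Γ_C, Γ_s}` for the evidence and `w_x = μ {C = x} = β_{X(x)} / N_{X(x)}`.
Splitting `E` over the value `x` of the culprit, independence gives
`μ (E ∩ {C = x}) = μ {S = s} · w_x · μ (Γ_x ∩ Γ_s)`, where the trait probability is `p_s` for
`x = s` and `p_x p_s` otherwise. The factor `μ {S = s} · p_s` cancels from the odds, leaving
`w_s / Σ_{x ≠ s} p_x w_x`; grouping the individuals by subpopulation, `Σ_x p_x w_x = Σ_i p_i β_i`,
and both closed forms are rearrangements of this quotient.
-/

namespace ENNReal

lemma div_sub_self_eq_inv {a : ℝ≥0∞} (b : ℝ≥0∞) (ha0 : a ≠ 0) (ha : a ≠ ∞) :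
    a / (b - a) = (b / a - 1)⁻¹ := by
  rw [← ENNReal.div_self ha0 ha, ← ENNReal.sub_div fun _ _ => ha0,
    ENNReal.inv_div (Or.inl ha) (Or.inl ha0)]

lemma div_div_eq_inv_mul_div_sub {n β p D : ℝ≥0∞} (hn0 : n ≠ 0) (hn : n ≠ ∞) (hβ0 : β ≠ 0)
    (hβ : β ≠ ∞) (hp : p ≠ ∞) :
    β / n / D = (n * ((D + p * (β / n)) / β) - p)⁻¹ := by
  have hc0 : β / n ≠ 0 := ENNReal.div_ne_zero.2 ⟨hβ0, hn⟩
  have hc : β / n ≠ ∞ := ENNReal.div_ne_top hβ hn0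
  have hscale : n * ((D + p * (β / n)) / β) = D / (β / n) + p :=
    calc n * ((D + p * (β / n)) / β) = (D + p * (β / n)) / (β / n) := by
          rw [div_eq_mul_inv _ (β / n), ENNReal.inv_div (Or.inl hn) (Or.inl hn0)]
          simp only [div_eq_mul_inv]
          ring
      _ = D / (β / n) + p := by rw [ENNReal.add_div, ENNReal.mul_div_cancel_right hc0 hc]
  rw [hscale, ENNReal.add_sub_cancel_right hp, ENNReal.inv_div (Or.inl hc) (Or.inl hc0)]

lemma inv_mul_div_sub_div {n β p T : ℝ≥0∞} (hβ0 : β ≠ 0) (hβ : β ≠ ∞) (hp0 : p ≠ 0)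
    (hp : p ≠ ∞) (hT0 : T ≠ 0) (hT : T ≠ ∞) :
    p⁻¹ * (p * β / T / (n - p * β / T)) = (n * (T / β) - p)⁻¹ := by
  have hα0 : p * β / T ≠ 0 := ENNReal.div_ne_zero.2 ⟨mul_ne_zero hp0 hβ0, hT⟩
  have hα : p * β / T ≠ ∞ := ENNReal.div_ne_top (ENNReal.mul_ne_top hp hβ) hT0
  rw [div_sub_self_eq_inv n hα0 hα, ← ENNReal.mul_inv (Or.inl hp0) (Or.inl hp),
    ENNReal.mul_sub fun _ _ => hp, mul_one, div_eq_mul_inv n,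
    ENNReal.inv_div (Or.inl hT) (Or.inl hT0), ← mul_div_assoc, ← mul_div_assoc,
    ← mul_div_assoc, ENNReal.mul_div_mul_left _ _ hp0 hp, mul_div_assoc]

end ENNReal

lemma Finset.sum_div_card_fiber {X ι : Type*} [Fintype X] [Fintype ι] [DecidableEq ι]
    (sub : X → ι) (N : ι → ℕ) (hN : ∀ i, #{x | sub x = i} = N i) (hN0 : ∀ i, N i ≠ 0)
    (g : ι → ℝ≥0∞) :
    ∑ x, g (sub x) / N (sub x) = ∑ i, g i := by
  rw [← sum_fiberwise' univ sub fun i => g i / N i]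
  refine sum_congr rfl fun i _ => ?_
  rw [sum_const, hN, nsmul_eq_mul,
    ENNReal.mul_div_cancel (Nat.cast_ne_zero.2 (hN0 i)) (ENNReal.natCast_ne_top _)]

section

variable {Ω X : Type*} [MeasurableSpace Ω] {μ : Measure Ω}

lemma ProbabilityTheory.cond_div_cond_eq {E A B : Set Ω} (hA : MeasurableSet A)
    (hB : MeasurableSet B) (hE0 : μ E ≠ 0) (hE : μ E ≠ ∞) :
    μ[A | E] / μ[B | E] = μ (E ∩ A) / μ (E ∩ B) := by
  rw [cond_apply' hA, cond_apply' hB,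
    ENNReal.mul_div_mul_left _ _ (ENNReal.inv_ne_zero.2 hE) (ENNReal.inv_ne_top.2 hE0)]

variable [MeasurableSpace X] [MeasurableSingletonClass X]

lemma MeasureTheory.measure_inter_ne_eq_sum [Fintype X] [DecidableEq X] {C : Ω → X}
    (hC : Measurable C) (A : Set Ω) (s : X) :
    μ (A ∩ {ω | C ω ≠ s}) = ∑ x ∈ univ.erase s, μ (A ∩ {ω | C ω = x}) := by
  have hne : {ω | C ω ≠ s} = C ⁻¹' ↑(univ.erase s) := by ext; simp
  have hfib := sum_measure_preimage_singleton (μ := μ.restrict A) (univ.erase s)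
    fun x _ => hC (measurableSet_singleton x)
  rw [Measure.restrict_apply (hC (Finset.measurableSet _))] at hfib
  simp only [Measure.restrict_apply (hC (measurableSet_singleton _))] at hfib
  rw [hne, Set.inter_comm, ← hfib]
  exact sum_congr rfl fun x _ => by rw [Set.inter_comm]; rfl

lemma ProbabilityTheory.measure_evidence_inter_culprit_eq {C S : Ω → X} {Γ : X → Ω → Bool}
    (hCS : IndepFun C S μ) (hind : IndepFun (fun ω => (C ω, S ω)) (fun ω x => Γ x ω) μ)
    (s x : X) :
    μ ({ω | S ω = s} ∩ {ω | Γ (C ω) ω = true} ∩ {ω | Γ s ω = true} ∩ {ω | C ω = x}) =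
      μ {ω | C ω = x} * μ {ω | S ω = s} * μ ({ω | Γ x ω = true} ∩ {ω | Γ s ω = true}) := by
  have hset : {ω | S ω = s} ∩ {ω | Γ (C ω) ω = true} ∩ {ω | Γ s ω = true} ∩ {ω | C ω = x} =
      (fun ω => (C ω, S ω)) ⁻¹' {(x, s)} ∩
        (fun ω y => Γ y ω) ⁻¹' ((fun f => f x) ⁻¹' {true} ∩ (fun f => f s) ⁻¹' {true}) := by
    ext ω
    simp only [Set.mem_inter_iff, Set.mem_ofPred_eq, Set.mem_preimage, Set.mem_singleton_iff,
      Prod.mk.injEq]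
    constructor
    · rintro ⟨⟨⟨hS, hΓC⟩, hΓs⟩, rfl⟩
      exact ⟨⟨rfl, hS⟩, hΓC, hΓs⟩
    · rintro ⟨⟨rfl, hS⟩, hΓC, hΓs⟩
      exact ⟨⟨⟨hS, hΓC⟩, hΓs⟩, rfl⟩
  have hpair : (fun ω => (C ω, S ω)) ⁻¹' {(x, s)} = C ⁻¹' {x} ∩ S ⁻¹' {s} := by
    ext ω
    simp [Prod.ext_iff]
  rw [hset, hind.measure_inter_preimage_eq_mul _ _ (measurableSet_singleton _)
    ((measurable_pi_apply x (measurableSet_singleton true)).inter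
      (measurable_pi_apply s (measurableSet_singleton true))), hpair,
    hCS.measure_inter_preimage_eq_mul _ _ (measurableSet_singleton x) (measurableSet_singleton s)]
  rfl

lemma ProbabilityTheory.posterior_odds_eq_div_sum [IsFiniteMeasure μ] [Fintype X] [DecidableEq X]
    {C S : Ω → X} {Γ : X → Ω → Bool} (hC : Measurable C) (hCS : IndepFun C S μ)
    (hind : IndepFun (fun ω => (C ω, S ω)) (fun ω x => Γ x ω) μ) (hiid : iIndepFun Γ μ) {s : X}
    (hpos : μ ({ω | S ω = s} ∩ {ω | Γ (C ω) ω = true} ∩ {ω | Γ s ω = true}) ≠ 0) :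
    μ[{ω | C ω = s} | {ω | S ω = s} ∩ {ω | Γ (C ω) ω = true} ∩ {ω | Γ s ω = true}] /
        μ[{ω | C ω ≠ s} | {ω | S ω = s} ∩ {ω | Γ (C ω) ω = true} ∩ {ω | Γ s ω = true}] =
      μ {ω | C ω = s} / ∑ x ∈ univ.erase s, μ {ω | Γ x ω = true} * μ {ω | C ω = x} := by
  have hS0 : μ {ω | S ω = s} ≠ 0 := fun h =>
    hpos (measure_mono_null (Set.inter_subset_left.trans Set.inter_subset_left) h)
  have hΓ0 : μ {ω | Γ s ω = true} ≠ 0 := fun h => hpos (measure_mono_null Set.inter_subset_right h)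
  have hden : ∀ x ∈ univ.erase s,
      μ ({ω | S ω = s} ∩ {ω | Γ (C ω) ω = true} ∩ {ω | Γ s ω = true} ∩ {ω | C ω = x}) =
        μ {ω | S ω = s} * μ {ω | Γ s ω = true} * (μ {ω | Γ x ω = true} * μ {ω | C ω = x}) :=
    fun x hx => by
      have htraits : μ ({ω | Γ x ω = true} ∩ {ω | Γ s ω = true}) =
          μ {ω | Γ x ω = true} * μ {ω | Γ s ω = true} :=
        (hiid.indepFun (ne_of_mem_erase hx)).measure_inter_preimage_eq_mul _ _
          (measurableSet_singleton true) (measurableSet_singleton true)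
      rw [measure_evidence_inter_culprit_eq hCS hind, htraits]
      ring
  rw [cond_div_cond_eq (A := {ω | C ω = s}) (B := {ω | C ω ≠ s})
    (hC (measurableSet_singleton s)) (hC (measurableSet_singleton s).compl) hpos
    (measure_ne_top μ _), measure_inter_ne_eq_sum hC, sum_congr rfl hden, ← mul_sum,
    measure_evidence_inter_culprit_eq hCS hind, Set.inter_self, mul_rotate,
    ENNReal.mul_div_mul_left _ _ (mul_ne_zero hS0 hΓ0)
      (ENNReal.mul_ne_top (measure_ne_top μ _) (measure_ne_top μ _))]

end

theorem island_heterogeneous_posterior_odds_general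
    {Ω : Type*} [MeasurableSpace Ω] (μ : Measure Ω) [IsProbabilityMeasure μ]
    {X : Type*} [Fintype X] [DecidableEq X] [MeasurableSpace X] [MeasurableSingletonClass X]
    (m : ℕ) (sub : X → Fin m)                      -- subpopulation of each individual
    (Nsz : Fin m → ℕ)
    (hN : ∀ i, (Finset.univ.filter fun x => sub x = i).card = Nsz i)
    (hNpos : ∀ i, 0 < Nsz i)
    (β p : Fin m → ℝ≥0∞)
    (hβpos : ∀ i, β i ≠ 0) (hβsum : ∑ i, β i = 1)
    (hp1 : ∀ i, p i ≤ 1)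
    (C S : Ω → X) (hC : Measurable C)
    (hCunifsub : ∀ x : X, μ {ω | C ω = x} = β (sub x) / (Nsz (sub x) : ℝ≥0∞))
    (hCS : IndepFun C S μ)
    (Γ : X → Ω → Bool)
    (hiid : iIndepFun Γ μ)
    (hBer : ∀ x, μ {ω | Γ x ω = true} = p (sub x))
    (hind : IndepFun (fun ω => (C ω, S ω)) (fun ω x => Γ x ω) μ)
    (s : X)
    (hpos : μ ({ω | S ω = s} ∩ {ω | Γ (C ω) ω = true} ∩ {ω | Γ s ω = true}) ≠ 0) :
    μ[|{ω | S ω = s} ∩ {ω | Γ (C ω) ω = true} ∩ {ω | Γ s ω = true}] {ω | C ω = s}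
      / μ[|{ω | S ω = s} ∩ {ω | Γ (C ω) ω = true} ∩ {ω | Γ s ω = true}] {ω | C ω ≠ s}
      = ((Nsz (sub s) : ℝ≥0∞) * ∑ i, p i * (β i / β (sub s)) - p (sub s))⁻¹ ∧
    μ[|{ω | S ω = s} ∩ {ω | Γ (C ω) ω = true} ∩ {ω | Γ s ω = true}] {ω | C ω = s}
      / μ[|{ω | S ω = s} ∩ {ω | Γ (C ω) ω = true} ∩ {ω | Γ s ω = true}] {ω | C ω ≠ s}
      = (p (sub s))⁻¹
        * ((p (sub s) * β (sub s) / ∑ j, p j * β j)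
            / ((Nsz (sub s) : ℝ≥0∞) - p (sub s) * β (sub s) / ∑ j, p j * β j)) := by
  set T := ∑ j, p j * β j
  have hβ : ∀ i, β i ≠ ∞ := fun i =>
    ne_top_of_le_ne_top ENNReal.one_ne_top (hβsum ▸ single_le_sum (by simp) (mem_univ i))
  have hp : ∀ i, p i ≠ ∞ := fun i => ne_top_of_le_ne_top ENNReal.one_ne_top (hp1 i)
  have hps0 : p (sub s) ≠ 0 := hBer s ▸ fun h => hpos (measure_mono_null Set.inter_subset_right h)
  have hT : ∑ x ∈ univ.erase s, p (sub x) * (β (sub x) / Nsz (sub x)) +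
      p (sub s) * (β (sub s) / Nsz (sub s)) = T := by
    rw [sum_erase_add _ _ (mem_univ s)]
    simp only [← mul_div_assoc]
    exact sum_div_card_fiber sub Nsz hN (fun i => (hNpos i).ne') fun j => p j * β j
  have hodds : β (sub s) / Nsz (sub s) /
      ∑ x ∈ univ.erase s, p (sub x) * (β (sub x) / Nsz (sub x)) =
        ((Nsz (sub s) : ℝ≥0∞) * (T / β (sub s)) - p (sub s))⁻¹ :=
    hT ▸ ENNReal.div_div_eq_inv_mul_div_sub (Nat.cast_ne_zero.2 (hNpos _).ne')
      (ENNReal.natCast_ne_top _) (hβpos _) (hβ _) (hp _)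
  simp only [posterior_odds_eq_div_sum hC hCS hind hiid hpos, hCunifsub, hBer, hodds]
  refine ⟨?_, ?_⟩
  · simp only [T, div_eq_mul_inv, sum_mul, mul_assoc]
  · rw [ENNReal.inv_mul_div_sub_div (hβpos _) (hβ _) hps0 (hp _)
      (sum_eq_zero_iff.not.2 fun h => mul_ne_zero hps0 (hβpos _) (h (sub s) (mem_univ _)))
      (ENNReal.sum_ne_top.2 fun j _ => ENNReal.mul_ne_top (hp j) (hβ j))]

/-- Heterogeneous population posterior odds. -/
theorem island_heterogeneous_posterior_odds
    {Ω : Type*} [MeasurableSpace Ω] (μ : Measure Ω) [IsProbabilityMeasure μ]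
    {X : Type*} [Fintype X] [DecidableEq X] [MeasurableSpace X] [MeasurableSingletonClass X]
    (m : ℕ) (sub : X → Fin m)                      -- subpopulation of each individual
    (Nsz : Fin m → ℕ)
    (hN : ∀ i, (Finset.univ.filter fun x => sub x = i).card = Nsz i)
    (hNpos : ∀ i, 0 < Nsz i)
    (β p : Fin m → ℝ≥0∞)
    (hβpos : ∀ i, β i ≠ 0) (hβsum : ∑ i, β i = 1)
    (hp0 : ∀ i, p i ≠ 0) (hp1 : ∀ i, p i ≤ 1)
    (C S : Ω → X) (hC : Measurable C) (hS : Measurable S)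
    (hCsub : ∀ i, μ {ω | sub (C ω) = i} = β i)
    (hCunifsub : ∀ x : X, μ {ω | C ω = x} = β (sub x) / (Nsz (sub x) : ℝ≥0∞))
    (hCS : IndepFun C S μ)
    (Γ : X → Ω → Bool) (hΓ : ∀ x, Measurable (Γ x))
    (hiid : iIndepFun Γ μ)
    (hBer : ∀ x, μ {ω | Γ x ω = true} = p (sub x))
    (hind : IndepFun (fun ω => (C ω, S ω)) (fun ω x => Γ x ω) μ)
    (s : X)
    (hpos : μ ({ω | S ω = s} ∩ {ω | Γ (C ω) ω = true} ∩ {ω | Γ s ω = true}) ≠ 0) :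
    μ[|{ω | S ω = s} ∩ {ω | Γ (C ω) ω = true} ∩ {ω | Γ s ω = true}] {ω | C ω = s}
      / μ[|{ω | S ω = s} ∩ {ω | Γ (C ω) ω = true} ∩ {ω | Γ s ω = true}] {ω | C ω ≠ s}
      = ((Nsz (sub s) : ℝ≥0∞) * ∑ i, p i * (β i / β (sub s)) - p (sub s))⁻¹ ∧
    μ[|{ω | S ω = s} ∩ {ω | Γ (C ω) ω = true} ∩ {ω | Γ s ω = true}] {ω | C ω = s}
      / μ[|{ω | S ω = s} ∩ {ω | Γ (C ω) ω = true} ∩ {ω | Γ s ω = true}] {ω | C ω ≠ s}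
      = (p (sub s))⁻¹
        * ((p (sub s) * β (sub s) / ∑ j, p j * β j)
            / ((Nsz (sub s) : ℝ≥0∞) - p (sub s) * β (sub s) / ∑ j, p j * β j)) :=
  island_heterogeneous_posterior_odds_general μ m sub Nsz hN hNpos β p hβpos hβsum hp1 C S hC
    hCunifsub hCS Γ hiid hBer hind s hpos
end

section
/- Combined likelihood ratio in the heterogeneous model: under independence of S and C and uniformity of C on each subpopulation, P(Γ_C=1, Γ_s=1 | C=s, S=s) / P(Γ_C=1, Γ_s=1 | C≠s, S=s) = (N_s − β_s) / (N_s Σ_{j=1}^m p_j β_j − p_s β_s). -/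
/-!
Since `(C, S)` is independent of the trait process `Γ`, conditioning on `C = s, S = s` leaves
`Γ s` a Bernoulli(`p_s`) variable, so the numerator is `p_s`. On `C ≠ s, S = s` one splits
according to the value `x` of `C`: independence of `C` and `S`, and of `Γ x` and `Γ s`, turn the
denominator into `p_s · Σ_{x≠s} P(C = x) p_x / Σ_{x≠s} P(C = x)`. Uniformity within islands
evaluates both sums, `N_s Σ_{x≠s} P(C = x) g_x = N_s Σ_j g_j β_j - g_s β_s` for `g = 1, p`.
-/

open MeasureTheory ProbabilityTheory Finset
open scoped ENNReal

theorem ENNReal.div_mul_div_cancel_left {q K L : ℝ≥0∞} (hq0 : q ≠ 0) (hqtop : q ≠ ∞)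
    (hK0 : K ≠ 0) (hKtop : K ≠ ∞) : q / (q * (L / K)) = K / L := by
  calc q / (q * (L / K)) = q * 1 / (q * (L / K)) := by rw [mul_one]
    _ = (L / K)⁻¹ := by rw [ENNReal.mul_div_mul_left _ _ hq0 hqtop, one_div]
    _ = K / L := ENNReal.inv_div (.inl hKtop) (.inl hK0)

theorem Finset.natCast_mul_sum_erase_eq_sub {X ι : Type*} [Fintype X] [DecidableEq X]
    [Fintype ι] [DecidableEq ι] {sub : X → ι} {N : ι → ℕ}
    (hN : ∀ i, (Finset.univ.filter fun x => sub x = i).card = N i) (hNpos : ∀ i, 0 < N i)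
    {β : ι → ℝ≥0∞} {w : X → ℝ≥0∞} (hw : ∀ x, w x = β (sub x) / N (sub x))
    (g : ι → ℝ≥0∞) (s : X) (hs : g (sub s) * β (sub s) ≠ ∞) :
    (N (sub s) : ℝ≥0∞) * ∑ x ∈ univ.erase s, w x * g (sub x)
      = N (sub s) * ∑ j, g j * β j - g (sub s) * β (sub s) := by
  have hN0 : ∀ i, (N i : ℝ≥0∞) ≠ 0 := fun i => Nat.cast_ne_zero.mpr (hNpos i).ne'
  have hcancel : ∀ i, (N i : ℝ≥0∞) * (β i / N i * g i) = g i * β i := fun i => by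
    rw [← mul_assoc, ENNReal.mul_div_cancel (hN0 i) (ENNReal.natCast_ne_top _), mul_comm]
  have htotal : ∑ x, w x * g (sub x) = ∑ j, g j * β j := by
    simp_rw [hw, ← sum_fiberwise' univ sub fun j => β j / N j * g j, sum_const, hN,
      nsmul_eq_mul, hcancel]
  rw [← add_sum_erase _ _ (mem_univ s), hw] at htotal
  refine ENNReal.eq_sub_of_add_eq hs ?_
  rw [← htotal, mul_add, hcancel, add_comm]

theorem ProbabilityTheory.IndepFun.measure_preimage_inter_setOf_mem_eq_sum
    {Ω α β : Type*} [MeasurableSpace Ω] [MeasurableSpace α] [MeasurableSingletonClass α]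
    [MeasurableSpace β] {μ : Measure Ω} {Y : Ω → α} {Z : Ω → β} (hY : Measurable Y)
    (hZ : Measurable Z) (hYZ : IndepFun Y Z μ) (T : Finset α) {F : α → Set β}
    (hF : ∀ y ∈ T, MeasurableSet (F y)) :
    μ (Y ⁻¹' T ∩ {ω | Z ω ∈ F (Y ω)}) = ∑ y ∈ T, μ (Y ⁻¹' {y}) * μ (Z ⁻¹' F y) := by
  have hunion : Y ⁻¹' T ∩ {ω | Z ω ∈ F (Y ω)} = ⋃ y ∈ T, Y ⁻¹' {y} ∩ Z ⁻¹' F y := by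
    ext ω; simp
  rw [hunion, measure_biUnion_finset
    ((Set.pairwiseDisjoint_fiber Y T).mono fun _ => Set.inter_subset_left)
    fun y hy => (hY (measurableSet_singleton y)).inter (hZ (hF y hy))]
  exact sum_congr rfl fun y hy =>
    hYZ.measure_inter_preimage_eq_mul _ _ (measurableSet_singleton y) (hF y hy)

section IslandModel

variable {Ω X : Type*} [MeasurableSpace Ω] {μ : Measure Ω} [MeasurableSpace X]
  [MeasurableSingletonClass X] {C S : Ω → X} {Γ : X → Ω → Bool}

theorem measure_pair_preimage_inter_traits_eq_sum (hC : Measurable C) (hS : Measurable S)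
    (hΓ : ∀ x, Measurable (Γ x)) (hind : IndepFun (fun ω => (C ω, S ω)) (fun ω x => Γ x ω) μ)
    (s : X) (T : Finset (X × X)) :
    μ ((fun ω => (C ω, S ω)) ⁻¹' T ∩ ({ω | Γ (C ω) ω = true} ∩ {ω | Γ s ω = true}))
      = ∑ y ∈ T, μ ((fun ω => (C ω, S ω)) ⁻¹' {y})
          * μ ({ω | Γ y.1 ω = true} ∩ {ω | Γ s ω = true}) :=
  hind.measure_preimage_inter_setOf_mem_eq_sum (hC.prodMk hS) (measurable_pi_lambda _ hΓ) T
    (F := fun y => {γ | γ y.1 = true ∧ γ s = true}) fun _ _ => by measurability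

theorem cond_traits_of_eq [IsFiniteMeasure μ] (hC : Measurable C) (hS : Measurable S)
    (hΓ : ∀ x, Measurable (Γ x)) (hind : IndepFun (fun ω => (C ω, S ω)) (fun ω x => Γ x ω) μ)
    (s : X) (hpos : μ ({ω | C ω = s} ∩ {ω | S ω = s}) ≠ 0) :
    μ[|{ω | C ω = s} ∩ {ω | S ω = s}] ({ω | Γ (C ω) ω = true} ∩ {ω | Γ s ω = true})
      = μ {ω | Γ s ω = true} := by
  have hA : {ω | C ω = s} ∩ {ω | S ω = s}
      = (fun ω => (C ω, S ω)) ⁻¹' ↑({(s, s)} : Finset (X × X)) := by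
    ext; simp [Prod.ext_iff]
  rw [hA] at hpos ⊢
  rw [cond_apply ((hC.prodMk hS) (Finset.measurableSet _)),
    measure_pair_preimage_inter_traits_eq_sum hC hS hΓ hind, sum_singleton, Set.inter_self,
    ← coe_singleton, ENNReal.inv_mul_cancel_left hpos (measure_ne_top _ _)]

theorem measure_C_ne_inter_S_eq [Fintype X] [DecidableEq X] (hC : Measurable C)
    (hCS : IndepFun C S μ) (s : X) :
    μ ({ω | C ω ≠ s} ∩ {ω | S ω = s}) = μ {ω | S ω = s} * ∑ x ∈ univ.erase s, μ {ω | C ω = x} := by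
  have hA : {ω | C ω ≠ s} ∩ {ω | S ω = s} = C ⁻¹' ↑(univ.erase s) ∩ S ⁻¹' {s} := by
    ext; simp
  rw [hA, hCS.measure_inter_preimage_eq_mul _ _ (Finset.measurableSet _)
    (measurableSet_singleton s), ← sum_measure_preimage_singleton _
      fun x _ => hC (measurableSet_singleton x), mul_comm]
  rfl

theorem cond_traits_of_ne [IsFiniteMeasure μ] [Fintype X] [DecidableEq X] (hC : Measurable C)
    (hS : Measurable S) (hΓ : ∀ x, Measurable (Γ x))
    (hind : IndepFun (fun ω => (C ω, S ω)) (fun ω x => Γ x ω) μ) (hCS : IndepFun C S μ)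
    (hiid : iIndepFun Γ μ) (s : X) (hS0 : μ {ω | S ω = s} ≠ 0) :
    μ[|{ω | C ω ≠ s} ∩ {ω | S ω = s}] ({ω | Γ (C ω) ω = true} ∩ {ω | Γ s ω = true})
      = μ {ω | Γ s ω = true} * ((∑ x ∈ univ.erase s, μ {ω | C ω = x} * μ {ω | Γ x ω = true})
          / ∑ x ∈ univ.erase s, μ {ω | C ω = x}) := by
  have hA : {ω | C ω ≠ s} ∩ {ω | S ω = s}
      = (fun ω => (C ω, S ω)) ⁻¹' ↑((univ.erase s) ×ˢ ({s} : Finset X)) := by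
    ext ω; by_cases h : S ω = s <;> simp [h, Ne.symm]
  have hterm : ∀ x ∈ univ.erase s, μ ((fun ω => (C ω, S ω)) ⁻¹' {(x, s)})
      * μ ({ω | Γ x ω = true} ∩ {ω | Γ s ω = true})
      = μ {ω | S ω = s} * μ {ω | Γ s ω = true} * (μ {ω | C ω = x} * μ {ω | Γ x ω = true}) := by
    intro x hx
    have hΓxs := (hiid.indepFun (ne_of_mem_erase hx)).measure_inter_preimage_eq_mul {true} {true}
      (measurableSet_singleton true) (measurableSet_singleton true)
    rw [← Set.singleton_prod_singleton, Set.mk_preimage_prod, hCS.measure_inter_preimage_eq_mul _ _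
      (measurableSet_singleton x) (measurableSet_singleton s)]
    simp only [Set.preimage, Set.mem_singleton_iff] at hΓxs ⊢
    rw [hΓxs]
    ring
  rw [cond_apply (hA ▸ (hC.prodMk hS) (Finset.measurableSet _)), ← ENNReal.div_eq_inv_mul,
    measure_C_ne_inter_S_eq hC hCS, hA, measure_pair_preimage_inter_traits_eq_sum hC hS hΓ hind,
    sum_product, sum_congr rfl fun x hx => by rw [sum_singleton, hterm x hx], ← mul_sum,
    mul_assoc, ENNReal.mul_div_mul_left _ _ hS0 (measure_ne_top _ _), mul_div_assoc]

end IslandModel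

theorem island_heterogeneous_combined_LR_general
    {Ω : Type*} [MeasurableSpace Ω] (μ : Measure Ω) [IsProbabilityMeasure μ]
    {X : Type*} [Fintype X] [DecidableEq X] [MeasurableSpace X] [MeasurableSingletonClass X]
    (m : ℕ) (sub : X → Fin m)
    (Nsz : Fin m → ℕ)
    (hN : ∀ i, (Finset.univ.filter fun x => sub x = i).card = Nsz i)
    (hNpos : ∀ i, 0 < Nsz i)
    (β p : Fin m → ℝ≥0∞)
    (hβsum : ∑ i, β i = 1)
    (hp0 : ∀ i, p i ≠ 0) (hp1 : ∀ i, p i ≤ 1)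
    (C S : Ω → X) (hC : Measurable C) (hS : Measurable S)
    (hCunifsub : ∀ x : X, μ {ω | C ω = x} = β (sub x) / (Nsz (sub x) : ℝ≥0∞))
    (hCS : IndepFun C S μ)
    (Γ : X → Ω → Bool) (hΓ : ∀ x, Measurable (Γ x))
    (hiid : iIndepFun Γ μ)
    (hBer : ∀ x, μ {ω | Γ x ω = true} = p (sub x))
    (hind : IndepFun (fun ω => (C ω, S ω)) (fun ω x => Γ x ω) μ)
    (s : X)
    (hpos1 : μ ({ω | C ω = s} ∩ {ω | S ω = s}) ≠ 0)
    (hpos2 : μ ({ω | C ω ≠ s} ∩ {ω | S ω = s}) ≠ 0) :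
    μ[|{ω | C ω = s} ∩ {ω | S ω = s}]
        ({ω | Γ (C ω) ω = true} ∩ {ω | Γ s ω = true})
      / μ[|{ω | C ω ≠ s} ∩ {ω | S ω = s}]
          ({ω | Γ (C ω) ω = true} ∩ {ω | Γ s ω = true})
      = ((Nsz (sub s) : ℝ≥0∞) - β (sub s))
        / ((Nsz (sub s) : ℝ≥0∞) * ∑ j, p j * β j - p (sub s) * β (sub s)) := by
  have hS0 : μ {ω | S ω = s} ≠ 0 := fun h => hpos1 (measure_mono_null Set.inter_subset_right h)
  have hK0 : ∑ x ∈ univ.erase s, μ {ω | C ω = x} ≠ 0 :=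
    right_ne_zero_of_mul (measure_C_ne_inter_S_eq hC hCS s ▸ hpos2)
  have hKtop : ∑ x ∈ univ.erase s, μ {ω | C ω = x} ≠ ∞ :=
    ENNReal.sum_ne_top.2 fun _ _ => measure_ne_top _ _
  have hβtop : β (sub s) ≠ ∞ :=
    ne_top_of_le_ne_top ENNReal.one_ne_top (hβsum ▸ single_le_sum (fun _ _ => zero_le) (mem_univ _))
  have hptop : p (sub s) ≠ ∞ := ne_top_of_le_ne_top ENNReal.one_ne_top (hp1 _)
  have hK := natCast_mul_sum_erase_eq_sub hN hNpos hCunifsub 1 s (by simpa using hβtop)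
  have hL := natCast_mul_sum_erase_eq_sub hN hNpos hCunifsub p s (ENNReal.mul_ne_top hptop hβtop)
  simp only [Pi.one_apply, mul_one, one_mul, hβsum] at hK
  rw [cond_traits_of_eq hC hS hΓ hind s hpos1, cond_traits_of_ne hC hS hΓ hind hCS hiid s hS0,
    ENNReal.div_mul_div_cancel_left (hBer s ▸ hp0 _) (hBer s ▸ hptop) hK0 hKtop,
    ← ENNReal.mul_div_mul_left _ _ (Nat.cast_ne_zero.2 (hNpos (sub s)).ne')
      (ENNReal.natCast_ne_top _), hK]
  simp_rw [hBer, hL]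

/-- Combined likelihood ratio in the heterogeneous model:
`P(I, E | G, S=s) / P(I, E | G^c, S=s) = (N_s − β_s) / (N_s Σ_j p_j β_j − p_s β_s)`. -/
theorem island_heterogeneous_combined_LR
    {Ω : Type*} [MeasurableSpace Ω] (μ : Measure Ω) [IsProbabilityMeasure μ]
    {X : Type*} [Fintype X] [DecidableEq X] [MeasurableSpace X] [MeasurableSingletonClass X]
    (m : ℕ) (sub : X → Fin m)
    (Nsz : Fin m → ℕ)
    (hN : ∀ i, (Finset.univ.filter fun x => sub x = i).card = Nsz i)
    (hNpos : ∀ i, 0 < Nsz i)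
    (β p : Fin m → ℝ≥0∞)
    (hβpos : ∀ i, β i ≠ 0) (hβsum : ∑ i, β i = 1)
    (hp0 : ∀ i, p i ≠ 0) (hp1 : ∀ i, p i ≤ 1)
    (C S : Ω → X) (hC : Measurable C) (hS : Measurable S)
    (hCsub : ∀ i, μ {ω | sub (C ω) = i} = β i)
    (hCunifsub : ∀ x : X, μ {ω | C ω = x} = β (sub x) / (Nsz (sub x) : ℝ≥0∞))
    (hCS : IndepFun C S μ)
    (Γ : X → Ω → Bool) (hΓ : ∀ x, Measurable (Γ x))
    (hiid : iIndepFun Γ μ)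
    (hBer : ∀ x, μ {ω | Γ x ω = true} = p (sub x))
    (hind : IndepFun (fun ω => (C ω, S ω)) (fun ω x => Γ x ω) μ)
    (s : X)
    (hpos1 : μ ({ω | C ω = s} ∩ {ω | S ω = s}) ≠ 0)
    (hpos2 : μ ({ω | C ω ≠ s} ∩ {ω | S ω = s}) ≠ 0) :
    μ[|{ω | C ω = s} ∩ {ω | S ω = s}]
        ({ω | Γ (C ω) ω = true} ∩ {ω | Γ s ω = true})
      / μ[|{ω | C ω ≠ s} ∩ {ω | S ω = s}]
          ({ω | Γ (C ω) ω = true} ∩ {ω | Γ s ω = true})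
      = ((Nsz (sub s) : ℝ≥0∞) - β (sub s))
        / ((Nsz (sub s) : ℝ≥0∞) * ∑ j, p j * β j - p (sub s) * β (sub s)) :=
  island_heterogeneous_combined_LR_general μ m sub Nsz hN hNpos β p hβsum hp0 hp1 C S hC hS
    hCunifsub hCS Γ hΓ hiid hBer hind s hpos1 hpos2
end

section
/- Monotonicity of updated frequencies: with p = E[W], p' = E[W | Γ_C=1], p'' = E[W | Γ_C=1, Γ_S=1, S=s], one has p'' ≥ p' ≥ p, with equality p''=p' only if N=0 or Var(W | Γ_C=1)=0, and p'=p only if Var(W)=0; moreover p'' = p' (1 + N(σ²_{W|I}/p' + p')) / (1 + N p'). -/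
/-!
Write `ν` for the law of `W` and `m_k = ∫ t^k dν`. Given `W = t` the `Γ_x` are independent
Bernoulli(`t`) variables and `(C, S)` is independent of `(W, Γ)`, so summing over the value of
`C` gives `P(Γ_C = 1, W ∈ dt) = t ν(dt)` and
`P(S = s, Γ_C = 1, Γ_s = 1, W ∈ dt) = (t + N t²) ν(dt) / (N + 1)²`
(the summand `C = s` contributes `t`, each of the `N` others `t²`). Hence `p = m₁`,
`p' = m₂ / m₁`, `Var(W | Γ_C = 1) = m₃ / m₁ - p'²` and `p'' = (m₂ + N m₃) / (m₁ + N m₂)`, and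
the claims follow from `σ² = m₁ (p' - p)` and `p'' - p' = N Var(W | Γ_C = 1) / (1 + N p')`.
-/

open MeasureTheory ProbabilityTheory
open scoped ENNReal

theorem Finset.sum_filter_forall_mem_prod_ite_eq_pow {X R : Type*} [Fintype X] [DecidableEq X]
    [CommSemiring R] (T : Finset X) {a b : R} (hab : a + b = 1) :
    ∑ f : X → Bool with ∀ x ∈ T, f x = true, ∏ y, (if f y then a else b) = a ^ T.card := by
  have hfactor : ∀ y, ∑ c : Bool, (if c then a else if y ∈ T then 0 else b)
      = if y ∈ T then a else 1 := by
    intro y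
    by_cases hy : y ∈ T <;> simp [hy, hab]
  calc ∑ f : X → Bool with ∀ x ∈ T, f x = true, ∏ y, (if f y then a else b)
      = ∑ f : X → Bool, ∏ y, (if f y then a else if y ∈ T then 0 else b) := by
        rw [Finset.sum_filter]
        refine Fintype.sum_congr _ _ fun f => ?_
        split_ifs with hf
        · exact Finset.prod_congr rfl fun y _ => by by_cases hy : y ∈ T <;> simp [hy, hf y]
        · push Not at hf
          obtain ⟨x, hxT, hx⟩ := hf
          exact (Finset.prod_eq_zero (Finset.mem_univ x) (by simp [hxT, hx])).symm
    _ = ∏ y, ∑ c : Bool, (if c then a else if y ∈ T then 0 else b) :=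
        (Fintype.prod_sum fun y (c : Bool) => if c then a else if y ∈ T then 0 else b).symm
    _ = a ^ T.card := by
        simp_rw [hfactor]
        rw [Finset.prod_ite_mem, Finset.univ_inter, Finset.prod_const]

theorem ae_withDensity_mem_of_eq_zero {α : Type*} [MeasurableSpace α] {μ : Measure α}
    {f : α → ℝ≥0∞} {s : Set α} (hs : MeasurableSet s) (hf : ∀ x ∉ s, f x = 0) :
    ∀ᵐ x ∂μ.withDensity f, x ∈ s := by
  rw [ae_iff]
  change μ.withDensity f sᶜ = 0
  rw [withDensity_apply _ hs.compl]
  exact (setLIntegral_congr_fun hs.compl fun x hx => hf x hx).trans lintegral_zero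

/-- A nonzero integral rules out the junk value of a non-integrable integrand, and `χ` agrees a.e.
with `(t * χ t) / t`. -/
theorem aemeasurable_of_integral_id_mul_ne_zero {χ : ℝ → ℝ} (h : ∫ t, t * χ t ≠ 0) :
    AEMeasurable χ := by
  have hint : Integrable (fun t => t * χ t) := by
    by_contra hcon
    exact h (integral_undef hcon)
  refine (hint.aemeasurable.div aemeasurable_id).congr ?_
  filter_upwards [Measure.ae_ne volume 0] with t ht
  simp [ht]

theorem integral_map_eq_integral_mul_density {Ω : Type*} [MeasurableSpace Ω] {μ : Measure Ω}
    {W : Ω → ℝ} {χ : ℝ → ℝ} (hχm : AEMeasurable χ) (hχ0 : ∀ t, 0 ≤ χ t)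
    (hmap : μ.map W = volume.withDensity fun t => ENNReal.ofReal (χ t)) (g : ℝ → ℝ) :
    ∫ t, g t ∂μ.map W = ∫ t, g t * χ t := by
  rw [hmap, integral_withDensity_eq_integral_toReal_smul₀ hχm.ennreal_ofReal
    (ae_of_all _ fun _ => ENNReal.ofReal_lt_top)]
  simp [ENNReal.toReal_ofReal (hχ0 _), mul_comm]

section Bernoulli

variable {Ω X : Type*} [MeasurableSpace Ω] {μ : Measure Ω} {Γ : X → Ω → Bool}
  {W : Ω → ℝ}

theorem measure_forall_mem_inter_preimage_eq_sum [Fintype X] [DecidableEq X]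
    (hΓ : ∀ x, Measurable (Γ x)) (T : Finset X) (B : Set ℝ) :
    μ ({ω | ∀ x ∈ T, Γ x ω = true} ∩ W ⁻¹' B)
      = ∑ f : X → Bool with ∀ x ∈ T, f x = true, μ ({ω | ∀ x, Γ x ω = f x} ∩ W ⁻¹' B) := by
  have hΓvec : Measurable fun ω x => Γ x ω := measurable_pi_lambda _ hΓ
  have hfiber : ∀ f : X → Bool, {ω | ∀ x, Γ x ω = f x} = (fun ω x => Γ x ω) ⁻¹' {f} := by
    intro f
    ext ω
    simp [funext_iff]
  simp_rw [hfiber, ← Measure.restrict_apply (hΓvec (measurableSet_singleton _))]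
  rw [sum_measure_preimage_singleton _ fun f _ => hΓvec (measurableSet_singleton f),
    Measure.restrict_apply (hΓvec (Set.toFinite _).measurableSet)]
  congr 2
  ext ω
  simp

theorem measure_forall_mem_inter_preimage_eq_lintegral_pow [Fintype X]
    (hΓ : ∀ x, Measurable (Γ x))
    (hmodel : ∀ (f : X → Bool) (B : Set ℝ), MeasurableSet B →
      μ ({ω | ∀ x, Γ x ω = f x} ∩ W ⁻¹' B)
        = ∫⁻ t in B, (∏ x : X, if f x then ENNReal.ofReal t else ENNReal.ofReal (1 - t))
          ∂(μ.map W))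
    (hsupp : ∀ᵐ t ∂(μ.map W), t ∈ Set.Icc (0 : ℝ) 1)
    (T : Finset X) (B : Set ℝ) (hB : MeasurableSet B) :
    μ ({ω | ∀ x ∈ T, Γ x ω = true} ∩ W ⁻¹' B)
      = ∫⁻ t in B, ENNReal.ofReal t ^ T.card ∂(μ.map W) := by
  classical
  rw [measure_forall_mem_inter_preimage_eq_sum hΓ T B,
    Finset.sum_congr rfl fun f _ => hmodel f B hB, ← lintegral_finsetSum]
  · refine lintegral_congr_ae (ae_restrict_of_ae ?_)
    filter_upwards [hsupp] with t ht
    refine Finset.sum_filter_forall_mem_prod_ite_eq_pow T ?_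
    rw [← ENNReal.ofReal_add ht.1 (by linarith [ht.2]), add_sub_cancel, ENNReal.ofReal_one]
  · intro f _
    refine Finset.measurable_prod _ fun x _ => ?_
    cases f x <;> simp only [Bool.false_eq_true, if_true, if_false] <;> fun_prop

theorem measure_preimage_inter_forall_mem_inter_preimage_eq_mul {β : Type*} [MeasurableSpace β]
    {Z : Ω → β} (hZ : IndepFun Z (fun ω => (W ω, fun x => Γ x ω)) μ) {R : Set β}
    (hR : MeasurableSet R) (T : Finset X) {B : Set ℝ} (hB : MeasurableSet B) :
    μ (Z ⁻¹' R ∩ ({ω | ∀ x ∈ T, Γ x ω = true} ∩ W ⁻¹' B))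
      = μ (Z ⁻¹' R) * μ ({ω | ∀ x ∈ T, Γ x ω = true} ∩ W ⁻¹' B) := by
  have hpre : {ω | ∀ x ∈ T, Γ x ω = true} ∩ W ⁻¹' B
      = (fun ω => (W ω, fun x => Γ x ω)) ⁻¹' (B ×ˢ {g | ∀ x ∈ T, g x = true}) := by
    ext ω
    simp [and_comm]
  have hG : MeasurableSet {g : X → Bool | ∀ x ∈ T, g x = true} := by
    simp only [Set.ofPred_forall]
    exact .biInter T.countable_toSet fun x _ => measurable_pi_apply x (measurableSet_singleton _)
  rw [hpre]
  exact hZ.measure_inter_preimage_eq_mul _ _ hR (hB.prod hG)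

end Bernoulli

theorem measure_eq_sum_measure_preimage_singleton_inter {Ω X : Type*} [MeasurableSpace Ω]
    {μ : Measure Ω} [Fintype X] [MeasurableSpace X] [MeasurableSingletonClass X] {C : Ω → X}
    (hC : Measurable C) (E : Set Ω) :
    μ E = ∑ x, μ (C ⁻¹' {x} ∩ E) := by
  simp_rw [← Measure.restrict_apply (hC (measurableSet_singleton _))]
  rw [sum_measure_preimage_singleton _ fun x _ => hC (measurableSet_singleton x)]
  simp

theorem integral_comp_cond_eq_div {Ω : Type*} [MeasurableSpace Ω] {μ : Measure Ω}
    {W : Ω → ℝ} {E : Set Ω} (hW : Measurable W) {c : ℝ≥0∞} (hc0 : c ≠ 0) (hctop : c ≠ ∞)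
    {d : ℝ → ℝ} (hd : Measurable d) (hd0 : 0 ≤ᵐ[μ.map W] d)
    (hlaw : ∀ B, MeasurableSet B →
      μ (E ∩ W ⁻¹' B) = c * ∫⁻ t in B, ENNReal.ofReal (d t) ∂μ.map W)
    (g : ℝ → ℝ) (hg : Measurable g) :
    ∫ ω, g (W ω) ∂μ[|E] = (∫ t, d t * g t ∂μ.map W) / ∫ t, d t ∂μ.map W := by
  have hmapE :
      (μ.restrict E).map W = c • (μ.map W).withDensity fun t => ENNReal.ofReal (d t) := by
    ext B hB
    rw [Measure.map_apply hW hB, Measure.restrict_apply (hW hB), Set.inter_comm, hlaw B hB,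
      Measure.smul_apply, withDensity_apply _ hB, smul_eq_mul]
  have hμE : (μ E).toReal = c.toReal * ∫ t, d t ∂μ.map W := by
    have h := hlaw Set.univ MeasurableSet.univ
    rw [Set.preimage_univ, Set.inter_univ, Measure.restrict_univ] at h
    rw [h, ENNReal.toReal_mul, integral_eq_lintegral_of_nonneg_ae hd0 hd.aestronglyMeasurable]
  have hrestrict : ∫ ω, g (W ω) ∂μ.restrict E = c.toReal * ∫ t, d t * g t ∂μ.map W := by
    rw [← integral_map hW.aemeasurable hg.aestronglyMeasurable, hmapE, integral_smul_measure,
      integral_withDensity_eq_integral_toReal_smul hd.ennreal_ofReal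
        (ae_of_all _ fun _ => ENNReal.ofReal_lt_top), smul_eq_mul]
    congr 1
    refine integral_congr_ae ?_
    filter_upwards [hd0] with t ht
    rw [ENNReal.toReal_ofReal ht, smul_eq_mul]
  have hc : c.toReal ≠ 0 := ENNReal.toReal_ne_zero.2 ⟨hc0, hctop⟩
  rw [ProbabilityTheory.cond, integral_smul_measure, hrestrict, ENNReal.toReal_inv, hμE,
    smul_eq_mul]
  field_simp

section Island

variable {Ω X : Type*} [MeasurableSpace Ω] {μ : Measure Ω} [Fintype X] [MeasurableSpace X]
  [MeasurableSingletonClass X] {N : ℕ} {C S : Ω → X} {Γ : X → Ω → Bool} {W : Ω → ℝ}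

theorem measure_gamma_C_inter_preimage (hX : Fintype.card X = N + 1) (hC : Measurable C)
    (hCunif : ∀ x : X, μ {ω | C ω = x} = 1 / (N + 1))
    (hind : IndepFun C (fun ω => (W ω, fun x => Γ x ω)) μ)
    (hbern : ∀ (T : Finset X) (B : Set ℝ), MeasurableSet B →
      μ ({ω | ∀ x ∈ T, Γ x ω = true} ∩ W ⁻¹' B)
        = ∫⁻ t in B, ENNReal.ofReal t ^ T.card ∂(μ.map W))
    {B : Set ℝ} (hB : MeasurableSet B) :
    μ ({ω | Γ (C ω) ω = true} ∩ W ⁻¹' B) = ∫⁻ t in B, ENNReal.ofReal t ∂(μ.map W) := by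
  have hfiber : ∀ x, C ⁻¹' {x} ∩ ({ω | Γ (C ω) ω = true} ∩ W ⁻¹' B)
      = C ⁻¹' {x} ∩ ({ω | ∀ y ∈ ({x} : Finset X), Γ y ω = true} ∩ W ⁻¹' B) := by
    intro x
    ext ω
    simp only [Set.mem_inter_iff, Set.mem_preimage, Set.mem_singleton_iff, Set.mem_ofPred_eq,
      Finset.mem_singleton, forall_eq]
    constructor <;> rintro ⟨rfl, h⟩ <;> exact ⟨rfl, h⟩
  have hCx : ∀ x, μ (C ⁻¹' {x}) = 1 / (N + 1) := hCunif
  rw [measure_eq_sum_measure_preimage_singleton_inter hC]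
  simp_rw [hfiber, measure_preimage_inter_forall_mem_inter_preimage_eq_mul hind
    (measurableSet_singleton _) _ hB, hbern _ _ hB, Finset.card_singleton, pow_one, hCx]
  rw [Finset.sum_const, Finset.card_univ, hX, nsmul_eq_mul, ← mul_assoc, Nat.cast_add,
    Nat.cast_one, one_div, ENNReal.mul_inv_cancel (by simp) (by simp), one_mul]

theorem measure_gamma_C_gamma_s_inter_preimage (hX : Fintype.card X = N + 1)
    (hC : Measurable C) (hCunif : ∀ x : X, μ {ω | C ω = x} = 1 / (N + 1))
    (hSunif : ∀ x : X, μ {ω | S ω = x} = 1 / (N + 1)) (hCS : IndepFun C S μ)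
    (hind : IndepFun (fun ω => (C ω, S ω)) (fun ω => (W ω, fun x => Γ x ω)) μ)
    (hbern : ∀ (T : Finset X) (B : Set ℝ), MeasurableSet B →
      μ ({ω | ∀ x ∈ T, Γ x ω = true} ∩ W ⁻¹' B)
        = ∫⁻ t in B, ENNReal.ofReal t ^ T.card ∂(μ.map W))
    (hnonneg : ∀ᵐ t ∂(μ.map W), 0 ≤ t) (s : X) {B : Set ℝ} (hB : MeasurableSet B) :
    μ ({ω | S ω = s} ∩ {ω | Γ (C ω) ω = true} ∩ {ω | Γ s ω = true} ∩ W ⁻¹' B)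
      = (1 / (N + 1)) ^ 2 * ∫⁻ t in B, ENNReal.ofReal (t + N * t ^ 2) ∂(μ.map W) := by
  classical
  have hfiber : ∀ x, C ⁻¹' {x}
        ∩ ({ω | S ω = s} ∩ {ω | Γ (C ω) ω = true} ∩ {ω | Γ s ω = true} ∩ W ⁻¹' B)
      = (fun ω => (C ω, S ω)) ⁻¹' {(x, s)}
        ∩ ({ω | ∀ y ∈ ({x, s} : Finset X), Γ y ω = true} ∩ W ⁻¹' B) := by
    intro x
    ext ω
    simp only [Set.mem_inter_iff, Set.mem_preimage, Set.mem_singleton_iff, Set.mem_ofPred_eq,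
      Finset.mem_insert, Finset.mem_singleton, forall_eq_or_imp, forall_eq, Prod.mk.injEq]
    constructor
    · rintro ⟨rfl, ⟨⟨hs, hx⟩, hΓs⟩, hW⟩
      exact ⟨⟨rfl, hs⟩, ⟨hx, hΓs⟩, hW⟩
    · rintro ⟨⟨rfl, hs⟩, ⟨hx, hΓs⟩, hW⟩
      exact ⟨rfl, ⟨⟨hs, hx⟩, hΓs⟩, hW⟩
  have hpair : ∀ x, μ ((fun ω => (C ω, S ω)) ⁻¹' {(x, s)}) = (1 / (N + 1)) ^ 2 := by
    intro x
    rw [← Set.singleton_prod_singleton, Set.mk_preimage_prod,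
      hCS.measure_inter_preimage_eq_mul _ _ (measurableSet_singleton x)
        (measurableSet_singleton s), sq]
    exact congrArg₂ (· * ·) (hCunif x) (hSunif s)
  have hcard : ∀ x, ({x, s} : Finset X).card = if x = s then 1 else 2 := by
    intro x
    split_ifs with hxs
    · simp [hxs]
    · exact Finset.card_pair hxs
  rw [measure_eq_sum_measure_preimage_singleton_inter hC]
  simp_rw [hfiber, measure_preimage_inter_forall_mem_inter_preimage_eq_mul hind
    (measurableSet_singleton _) _ hB, hbern _ _ hB, hpair, hcard]
  rw [← Finset.mul_sum, ← lintegral_finsetSum _ fun x _ => by fun_prop]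
  congr 1
  refine setLIntegral_congr_fun_ae hB ?_
  filter_upwards [hnonneg] with t ht _
  rw [Finset.sum_eq_add_sum_sdiff_singleton_of_mem (Finset.mem_univ s), if_pos rfl,
    Finset.sum_congr rfl fun x hx => by rw [if_neg (by simpa using hx)], Finset.sum_const,
    Finset.card_univ_sdiff, Finset.card_singleton, hX, Nat.add_sub_cancel, nsmul_eq_mul,
    ENNReal.ofReal_add ht (by positivity), ENNReal.ofReal_mul (by positivity),
    ENNReal.ofReal_pow ht, ENNReal.ofReal_natCast, pow_one]

theorem integral_cond_gamma_C (hW : Measurable W) (hX : Fintype.card X = N + 1)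
    (hC : Measurable C) (hCunif : ∀ x : X, μ {ω | C ω = x} = 1 / (N + 1))
    (hind : IndepFun C (fun ω => (W ω, fun x => Γ x ω)) μ)
    (hbern : ∀ (T : Finset X) (B : Set ℝ), MeasurableSet B →
      μ ({ω | ∀ x ∈ T, Γ x ω = true} ∩ W ⁻¹' B)
        = ∫⁻ t in B, ENNReal.ofReal t ^ T.card ∂(μ.map W))
    (hnonneg : ∀ᵐ t ∂(μ.map W), 0 ≤ t) (g : ℝ → ℝ) (hg : Measurable g) :
    ∫ ω, g (W ω) ∂μ[|{ω | Γ (C ω) ω = true}]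
      = (∫ t, t * g t ∂μ.map W) / ∫ t, t ∂μ.map W :=
  integral_comp_cond_eq_div hW one_ne_zero ENNReal.one_ne_top measurable_id hnonneg
    (fun _ hB => (measure_gamma_C_inter_preimage hX hC hCunif hind hbern hB).trans
      (one_mul _).symm) g hg

theorem integral_cond_gamma_C_gamma_s (hW : Measurable W) (hX : Fintype.card X = N + 1)
    (hC : Measurable C) (hCunif : ∀ x : X, μ {ω | C ω = x} = 1 / (N + 1))
    (hSunif : ∀ x : X, μ {ω | S ω = x} = 1 / (N + 1)) (hCS : IndepFun C S μ)
    (hind : IndepFun (fun ω => (C ω, S ω)) (fun ω => (W ω, fun x => Γ x ω)) μ)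
    (hbern : ∀ (T : Finset X) (B : Set ℝ), MeasurableSet B →
      μ ({ω | ∀ x ∈ T, Γ x ω = true} ∩ W ⁻¹' B)
        = ∫⁻ t in B, ENNReal.ofReal t ^ T.card ∂(μ.map W))
    (hnonneg : ∀ᵐ t ∂(μ.map W), 0 ≤ t) (s : X) (g : ℝ → ℝ) (hg : Measurable g) :
    ∫ ω, g (W ω) ∂μ[|{ω | S ω = s} ∩ {ω | Γ (C ω) ω = true} ∩ {ω | Γ s ω = true}]
      = (∫ t, (t + N * t ^ 2) * g t ∂μ.map W) / ∫ t, t + N * t ^ 2 ∂μ.map W :=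
  integral_comp_cond_eq_div hW (by simp) (by simp) (by fun_prop)
    (hnonneg.mono fun t ht => by positivity)
    (fun _ hB =>
      measure_gamma_C_gamma_s_inter_preimage hX hC hCunif hSunif hCS hind hbern hnonneg s hB)
    g hg

end Island

theorem integrable_pow_of_ae_mem_Icc {ν : Measure ℝ} [IsFiniteMeasure ν]
    (h : ∀ᵐ t ∂ν, t ∈ Set.Icc (0 : ℝ) 1) (n : ℕ) : Integrable (fun t => t ^ n) ν := by
  refine (integrable_const (1 : ℝ)).mono' (by fun_prop) ?_
  filter_upwards [h] with t ht
  rw [norm_pow, Real.norm_of_nonneg ht.1]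
  exact pow_le_one₀ ht.1 ht.2

theorem integral_eq_of_eq_cubic {ν : Measure ℝ} [IsProbabilityMeasure ν]
    (hint : ∀ n : ℕ, Integrable (fun t => t ^ n) ν) {f : ℝ → ℝ} (a b c d : ℝ)
    (hf : ∀ t, f t = a + b * t + c * t ^ 2 + d * t ^ 3) :
    ∫ t, f t ∂ν = a + b * ∫ t, t ∂ν + c * ∫ t, t ^ 2 ∂ν + d * ∫ t, t ^ 3 ∂ν := by
  have hint1 : Integrable (fun t => b * t) ν := by simpa using (hint 1).const_mul b
  have hint2 : Integrable (fun t => a + b * t) ν := (integrable_const a).add hint1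
  have hint3 : Integrable (fun t => a + b * t + c * t ^ 2) ν := hint2.add ((hint 2).const_mul c)
  simp_rw [hf]
  rw [integral_add hint3 ((hint 3).const_mul d), integral_add hint2 ((hint 2).const_mul c),
    integral_add (integrable_const a) hint1]
  rw [integral_const_mul, integral_const_mul, integral_const_mul, integral_const, probReal_univ,
    one_smul]

theorem updated_frequency_relations {N : ℕ} {p m2 m3 σ2 p' varI p'' : ℝ} (hp : 0 < p)
    (hσ2 : σ2 = m2 - p ^ 2) (hσ2_nonneg : 0 ≤ σ2) (hp' : p' = m2 / p)
    (hvarI : varI = (m3 - 2 * p' * m2 + p' ^ 2 * p) / p) (hvarI_nonneg : 0 ≤ varI)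
    (hp'' : p'' = (m2 + N * m3) / (p + N * m2)) :
    p ≤ p' ∧ p' ≤ p'' ∧ (p'' = p' → N = 0 ∨ varI = 0) ∧ (p' = p → σ2 = 0) ∧
      p'' = p' * (1 + N * (varI / p' + p')) / (1 + N * p') := by
  have hm2 : m2 = p * p' := by rw [hp']; field_simp
  have hm3 : m3 = p * (varI + p' ^ 2) := by rw [hvarI, hm2]; field_simp; ring
  have hσ2' : σ2 = p * (p' - p) := by rw [hσ2, hm2]; ring
  have hpp' : p ≤ p' := by nlinarith
  have hp'0 : 0 < p' := hp.trans_le hpp'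
  have hden : 0 < 1 + N * p' := by positivity
  have hgap : p'' - p' = N * varI / (1 + N * p') := by
    rw [hp'', hm2, hm3]
    field_simp
    ring
  refine ⟨hpp', ?_, fun h => ?_, fun h => by rw [hσ2', h, sub_self, mul_zero], ?_⟩
  · have : 0 ≤ p'' - p' := by rw [hgap]; positivity
    linarith
  · rw [h, sub_self, eq_comm, div_eq_zero_iff, mul_eq_zero, Nat.cast_eq_zero] at hgap
    exact hgap.resolve_right hden.ne'
  · rw [eq_div_iff hden.ne', ← sub_eq_zero]
    rw [eq_div_iff hden.ne'] at hgap
    field_simp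
    linear_combination hgap

theorem island_updated_frequency_monotone_general
    {Ω : Type*} [MeasurableSpace Ω] (μ : Measure Ω) [IsProbabilityMeasure μ]
    {X : Type*} [Fintype X] [MeasurableSpace X] [MeasurableSingletonClass X]
    (N : ℕ) (hX : Fintype.card X = N + 1)
    (C S : Ω → X) (hC : Measurable C)
    (hCunif : ∀ x : X, μ {ω | C ω = x} = 1 / (N + 1))
    (hSunif : ∀ x : X, μ {ω | S ω = x} = 1 / (N + 1))
    (hCS : IndepFun C S μ)
    (Γ : X → Ω → Bool) (hΓ : ∀ x, Measurable (Γ x))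
    (W : Ω → ℝ) (hW : Measurable W)
    (χ : ℝ → ℝ) (hχ0 : ∀ t, 0 ≤ χ t) (hχsupp : ∀ t, t ∉ Set.Icc (0:ℝ) 1 → χ t = 0)
    (hmap : μ.map W = MeasureTheory.volume.withDensity (fun t => ENNReal.ofReal (χ t)))
    (p : ℝ) (hp0 : 0 < p) (hp : ∫ t, t * χ t = p)
    (σ2 : ℝ) (hσ2 : ∫ t, (t - p) ^ 2 * χ t = σ2)
    (hind : IndepFun (fun ω => (C ω, S ω)) (fun ω => (W ω, fun x => Γ x ω)) μ)
    (hmodel : ∀ (f : X → Bool) (B : Set ℝ), MeasurableSet B →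
      μ ({ω | ∀ x, Γ x ω = f x} ∩ W ⁻¹' B)
        = ∫⁻ t in B,
            (∏ x : X, if f x then ENNReal.ofReal t else ENNReal.ofReal (1 - t))
          ∂(μ.map W))
    (s : X)
    (p' : ℝ) (hp' : p' = ∫ ω, W ω ∂(μ[|{ω | Γ (C ω) ω = true}]))
    (varI : ℝ) (hvarI : varI = ∫ ω, (W ω - p') ^ 2 ∂(μ[|{ω | Γ (C ω) ω = true}]))
    (p'' : ℝ)
    (hp'' : p'' = ∫ ω, W ω
      ∂(μ[|{ω | S ω = s} ∩ {ω | Γ (C ω) ω = true} ∩ {ω | Γ s ω = true}])) :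
    p ≤ p' ∧ p' ≤ p'' ∧
    (p'' = p' → N = 0 ∨ varI = 0) ∧
    (p' = p → σ2 = 0) ∧
    p'' = p' * (1 + N * (varI / p' + p')) / (1 + N * p') := by
  have : IsProbabilityMeasure (μ.map W) := Measure.isProbabilityMeasure_map hW.aemeasurable
  have hsupp : ∀ᵐ t ∂(μ.map W), t ∈ Set.Icc (0 : ℝ) 1 :=
    hmap ▸ ae_withDensity_mem_of_eq_zero measurableSet_Icc fun t ht => by simp [hχsupp t ht]
  have hnonneg : ∀ᵐ t ∂(μ.map W), 0 ≤ t := hsupp.mono fun t ht => ht.1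
  have hint := integrable_pow_of_ae_mem_Icc hsupp
  have hχ := integral_map_eq_integral_mul_density
    (aemeasurable_of_integral_id_mul_ne_zero (hp ▸ hp0.ne')) hχ0 hmap
  have hbern := measure_forall_mem_inter_preimage_eq_lintegral_pow hΓ hmodel hsupp
  have hcondI := integral_cond_gamma_C hW hX hC hCunif (hind.comp measurable_fst measurable_id)
    hbern hnonneg
  have hcondA := integral_cond_gamma_C_gamma_s hW hX hC hCunif hSunif hCS hind hbern hnonneg s
  have hm1 : ∫ t, t ∂(μ.map W) = p := (hχ _).trans hp
  refine updated_frequency_relations hp0 (m2 := ∫ t, t ^ 2 ∂(μ.map W))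
    (m3 := ∫ t, t ^ 3 ∂(μ.map W)) ?_
    (hσ2 ▸ integral_nonneg fun t => mul_nonneg (sq_nonneg _) (hχ0 t)) ?_ ?_
    (hvarI ▸ integral_nonneg fun ω => sq_nonneg _) ?_
  · rw [← hσ2, ← hχ, integral_eq_of_eq_cubic hint (p ^ 2) (-2 * p) 1 0 fun t => by ring, hm1]
    ring
  · rw [hp', hcondI (fun t => t) measurable_id,
      integral_eq_of_eq_cubic hint 0 0 1 0 fun t => by ring, hm1]
    ring
  · rw [hvarI, hcondI (fun t => (t - p') ^ 2) (by fun_prop),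
      integral_eq_of_eq_cubic hint 0 (p' ^ 2) (-2 * p') 1 fun t => by ring, hm1]
    ring
  · rw [hp'', hcondA (fun t => t) measurable_id,
      integral_eq_of_eq_cubic hint 0 0 1 N fun t => by ring,
      integral_eq_of_eq_cubic hint (f := fun t => t + N * t ^ 2) 0 1 N 0 fun t => by ring, hm1]
    ring

/-- Monotonicity of the updated frequencies `p'' ≥ p' ≥ p`, the equality conditions,
and the formula `p'' = p'(1 + N(σ²_{W|I}/p' + p'))/(1 + N p')`. -/
theorem island_updated_frequency_monotone
    {Ω : Type*} [MeasurableSpace Ω] (μ : Measure Ω) [IsProbabilityMeasure μ]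
    {X : Type*} [Fintype X] [MeasurableSpace X] [MeasurableSingletonClass X]
    (N : ℕ) (hX : Fintype.card X = N + 1)
    (C S : Ω → X) (hC : Measurable C) (hS : Measurable S)
    (hCunif : ∀ x : X, μ {ω | C ω = x} = 1 / (N + 1))
    (hSunif : ∀ x : X, μ {ω | S ω = x} = 1 / (N + 1))
    (hCS : IndepFun C S μ)
    (Γ : X → Ω → Bool) (hΓ : ∀ x, Measurable (Γ x))
    (W : Ω → ℝ) (hW : Measurable W)
    (χ : ℝ → ℝ) (hχ0 : ∀ t, 0 ≤ χ t) (hχsupp : ∀ t, t ∉ Set.Icc (0:ℝ) 1 → χ t = 0)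
    (hmap : μ.map W = MeasureTheory.volume.withDensity (fun t => ENNReal.ofReal (χ t)))
    (p : ℝ) (hp0 : 0 < p) (hp : ∫ t, t * χ t = p)
    (σ2 : ℝ) (hσ2 : ∫ t, (t - p) ^ 2 * χ t = σ2)
    (hind : IndepFun (fun ω => (C ω, S ω)) (fun ω => (W ω, fun x => Γ x ω)) μ)
    (hmodel : ∀ (f : X → Bool) (B : Set ℝ), MeasurableSet B →
      μ ({ω | ∀ x, Γ x ω = f x} ∩ W ⁻¹' B)
        = ∫⁻ t in B,
            (∏ x : X, if f x then ENNReal.ofReal t else ENNReal.ofReal (1 - t))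
          ∂(μ.map W))
    (s : X)
    (hpos : μ ({ω | S ω = s} ∩ {ω | Γ (C ω) ω = true} ∩ {ω | Γ s ω = true}) ≠ 0)
    (p' : ℝ) (hp' : p' = ∫ ω, W ω ∂(μ[|{ω | Γ (C ω) ω = true}]))
    (varI : ℝ) (hvarI : varI = ∫ ω, (W ω - p') ^ 2 ∂(μ[|{ω | Γ (C ω) ω = true}]))
    (p'' : ℝ)
    (hp'' : p'' = ∫ ω, W ω
      ∂(μ[|{ω | S ω = s} ∩ {ω | Γ (C ω) ω = true} ∩ {ω | Γ s ω = true}])) :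
    p ≤ p' ∧ p' ≤ p'' ∧
    (p'' = p' → N = 0 ∨ varI = 0) ∧
    (p' = p → σ2 = 0) ∧
    p'' = p' * (1 + N * (varI / p' + p')) / (1 + N * p') :=
  island_updated_frequency_monotone_general μ N hX C S hC hCunif hSunif hCS Γ hΓ W hW χ hχ0 hχsupp
    hmap p hp0 hp σ2 hσ2 hind hmodel s p' hp' varI hvarI p'' hp''
end

section
/- Symmetry of the posterior guilt probability in the suspect's and criminal's subpopulation priors: in the model with subpopulation and frequency uncertainty, the posterior probability P(C=S | Γ_C=1, Γ_S=1) given by formula (Σ_i p_i ε_i β_i / N_i) / (Σ_i (p_i ε_i β_i / N_i)(1 + N_i Σ_j p_j β_j/β_i + (N_i−1)σ_i²/p_i − p_i)) is invariant under exchanging the vectors ε = (ε_i) and β = (β_i). -/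
open scoped BigOperators

/-- Symmetry of the posterior guilt probability in the suspect's and criminal's
subpopulation priors: the expression
`(Σ_i p_i ε_i β_i / N_i) / (Σ_i (p_i ε_i β_i / N_i)(1 + N_i Σ_j p_j β_j/β_i + (N_i−1)σ_i²/p_i − p_i))`
is invariant under exchanging `ε` and `β`. -/
theorem island_guilt_symmetric_in_priors
    (m : ℕ) (Nsz : Fin m → ℕ) (hN : ∀ i, 0 < Nsz i)
    (p β ε σ2 : Fin m → ℝ)
    (hp : ∀ i, 0 < p i) (hβ : ∀ i, 0 < β i) (hε : ∀ i, 0 < ε i)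
    (hσ2 : ∀ i, 0 ≤ σ2 i)
    (hβ1 : ∑ i, β i = 1) (hε1 : ∑ i, ε i = 1)
    (F : (Fin m → ℝ) → (Fin m → ℝ) → ℝ)
    (hF : ∀ ε' β', F ε' β' =
      (∑ i, p i * ε' i * β' i / (Nsz i : ℝ))
      / (∑ i, (p i * ε' i * β' i / (Nsz i : ℝ))
          * (1 + (Nsz i : ℝ) * (∑ j, p j * β' j / β' i)
              + ((Nsz i : ℝ) - 1) * σ2 i / p i - p i))) :
    F ε β = F β ε := by
  have key : ∀ (a b : Fin m → ℝ), (∀ i, b i ≠ 0) →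
      (∑ i, (p i * a i * b i / (Nsz i : ℝ))
          * (1 + (Nsz i : ℝ) * (∑ j, p j * b j / b i)
              + ((Nsz i : ℝ) - 1) * σ2 i / p i - p i))
      = (∑ i, (p i * a i * b i / (Nsz i : ℝ))
          * (1 + ((Nsz i : ℝ) - 1) * σ2 i / p i - p i))
        + (∑ i, p i * a i) * (∑ j, p j * b j) := by
    intro a b hb
    rw [Finset.sum_mul]
    rw [← Finset.sum_add_distrib]
    refine Finset.sum_congr rfl fun i _ => ?_
    have hNi : (Nsz i : ℝ) ≠ 0 := by
      exact_mod_cast (hN i).ne'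
    have : (∑ j, p j * b j / b i) = (∑ j, p j * b j) / b i := by
      rw [← Finset.sum_div]
    rw [this]
    field_simp [hb i, (hp i).ne', hNi]
    ring
  rw [hF, hF, key ε β (fun i => (hβ i).ne'), key β ε (fun i => (hε i).ne')]
  have hnum : (∑ i, p i * ε i * β i / (Nsz i : ℝ)) = (∑ i, p i * β i * ε i / (Nsz i : ℝ)) := by
    refine Finset.sum_congr rfl fun i _ => by ring
  have hrest : (∑ i, (p i * ε i * β i / (Nsz i : ℝ)) * (1 + ((Nsz i : ℝ) - 1) * σ2 i / p i - p i))
      = (∑ i, (p i * β i * ε i / (Nsz i : ℝ)) * (1 + ((Nsz i : ℝ) - 1) * σ2 i / p i - p i)) := by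
    refine Finset.sum_congr rfl fun i _ => by ring
  rw [hnum, hrest, mul_comm (∑ i, p i * ε i) (∑ j, p j * β j)]
end

section
/- Database-focused likelihood ratio: with database D = {x_1,...,x_n} ⊆ X, evidence E_D = {Γ_{x_1}=...=Γ_{x_k}=1, Γ_{x_{k+1}}=...=Γ_{x_n}=0}, Γ_x i.i.d. Bernoulli(p) given innocence configurations, and α_i = P(C=x_i | Γ_C=1), one has P(E_D | C∈D, Γ_C=1) / P(E_D | C∉D, Γ_C=1) = (α_1+...+α_k) / (p(α_1+...+α_n)), and the posterior odds are P(C∈D | E_D, Γ_C=1)/P(C∉D | E_D, Γ_C=1) = (α_1+...+α_k)/(p(α_{n+1}+...+α_{N+1})). -/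
open MeasureTheory ProbabilityTheory
open scoped ENNReal

/-! Since the culprit `C` is independent of the `Γ`-vector,
`P(C = i, Γ_C = 1, E) = P(C = i) · P(Γ_i = 1, E)` for every event `E` of the `Γ`-vector.
For `E = E_D` and a database member `i`, `P(Γ_i = 1, E_D)` is `P(E_D)` or `0` according as `i`
is one of the `Γ`-bearers of `D` or not; for `i ∉ D` it is `p · P(E_D)`, because `Γ_i` is
independent of the statuses in `D`. Hence `P(E_D | C ∉ D, Γ_C = 1) = P(E_D)`, and both ratios
reduce to ratios of sums of `P(C = i)`. Finally `α_i = P(C = i) · p / P(Γ_C = 1)`, and the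
common factor `p / P(Γ_C = 1)` cancels. -/

namespace IslandProblem

section Evidence

variable {Ω ι : Type*} {Γ : ι → Ω → Bool}

def databaseEvidence (Γ : ι → Ω → Bool) (D K : Finset ι) : Set Ω :=
  {ω | ∀ i ∈ D, Γ i ω = true ↔ i ∈ K}

theorem bearer_inter_databaseEvidence_of_mem {D K : Finset ι} (hKD : K ⊆ D) {i : ι}
    (hi : i ∈ K) :
    {ω | Γ i ω = true} ∩ databaseEvidence Γ D K = databaseEvidence Γ D K :=
  Set.inter_eq_right.mpr fun _ hω => (hω i (hKD hi)).mpr hi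

theorem bearer_inter_databaseEvidence_of_notMem {D K : Finset ι} {i : ι} (hiD : i ∈ D)
    (hiK : i ∉ K) :
    {ω | Γ i ω = true} ∩ databaseEvidence Γ D K = ∅ :=
  Set.eq_empty_of_forall_notMem fun _ ⟨hΓi, hω⟩ => hiK ((hω i hiD).mp hΓi)

theorem databaseEvidence_eq_preimage (D K : Finset ι) :
    databaseEvidence Γ D K = (fun ω x => Γ x ω) ⁻¹' {f | ∀ i ∈ D, f i = true ↔ i ∈ K} :=
  rfl

variable [MeasurableSpace Ω] {μ : Measure Ω}

theorem measurableSet_databaseEvidence [Finite ι] (hΓ : ∀ i, Measurable (Γ i))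
    (D K : Finset ι) :
    MeasurableSet (databaseEvidence Γ D K) := by
  rw [databaseEvidence_eq_preimage]
  exact measurable_pi_lambda _ hΓ MeasurableSet.of_discrete

theorem measure_bearer_inter_databaseEvidence_of_notMem
    (hΓ : ∀ i, Measurable (Γ i)) (hiid : iIndepFun Γ μ) {p : ℝ≥0∞}
    (hBer : ∀ i, μ {ω | Γ i ω = true} = p) (D K : Finset ι) {i : ι} (hi : i ∉ D) :
    μ ({ω | Γ i ω = true} ∩ databaseEvidence Γ D K) = p * μ (databaseEvidence Γ D K) := by
  have hE : databaseEvidence Γ D K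
      = (fun ω (j : D) => Γ j ω) ⁻¹' {f | ∀ j, f j = true ↔ (j : ι) ∈ K} := by
    ext ω
    simp [databaseEvidence]
  rw [hE, ← hBer i]
  have hind := hiid.indepFun_finset {i} D (Finset.disjoint_singleton_left.mpr hi) hΓ
  exact hind.measure_inter_preimage_eq_mul {f | f ⟨i, Finset.mem_singleton_self i⟩ = true} _
    .of_discrete .of_discrete

end Evidence

section Culprit

variable {Ω ι : Type*} [MeasurableSpace Ω] {μ : Measure Ω}
  [MeasurableSpace ι] [MeasurableSingletonClass ι] {C : Ω → ι} {Γ : ι → Ω → Bool}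

theorem measure_preimage_inter_eq_sum (hC : Measurable C) (s : Finset ι) {S : Set Ω}
    (hS : MeasurableSet S) :
    μ (C ⁻¹' s ∩ S) = ∑ i ∈ s, μ (C ⁻¹' {i} ∩ S) := by
  have := sum_measure_preimage_singleton (μ := μ.restrict S) s
    fun i _ => hC (measurableSet_singleton i)
  simpa only [Measure.restrict_apply' hS] using this.symm

variable [Finite ι]

theorem measurableSet_bearer (hC : Measurable C) (hΓ : ∀ i, Measurable (Γ i)) :
    MeasurableSet {ω | Γ (C ω) ω = true} := by
  have : Measurable fun ω => Γ (C ω) ω :=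
    (measurable_from_prod_countable_left (f := fun q : Ω × ι => Γ q.2 q.1) hΓ).comp
      (measurable_id.prodMk hC)
  exact this (measurableSet_singleton true)

theorem measure_culprit_inter_bearer_inter (hind : IndepFun C (fun ω x => Γ x ω) μ) (i : ι)
    (B : Set (ι → Bool)) :
    μ (C ⁻¹' {i} ∩ {ω | Γ (C ω) ω = true} ∩ (fun ω x => Γ x ω) ⁻¹' B)
      = μ (C ⁻¹' {i}) * μ ({ω | Γ i ω = true} ∩ (fun ω x => Γ x ω) ⁻¹' B) := by
  have hset : C ⁻¹' {i} ∩ {ω | Γ (C ω) ω = true} ∩ (fun ω x => Γ x ω) ⁻¹' B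
      = C ⁻¹' {i} ∩ (fun ω x => Γ x ω) ⁻¹' ({f | f i = true} ∩ B) := by
    ext ω
    simp only [Set.mem_inter_iff, Set.mem_preimage, Set.mem_singleton_iff, Set.mem_ofPred_eq]
    constructor
    · rintro ⟨⟨rfl, h⟩, hB⟩; exact ⟨rfl, h, hB⟩
    · rintro ⟨rfl, h, hB⟩; exact ⟨⟨rfl, h⟩, hB⟩
  rw [hset, hind.measure_inter_preimage_eq_mul _ _ (measurableSet_singleton i) .of_discrete]
  rfl

variable (hC : Measurable C) (hΓ : ∀ i, Measurable (Γ i))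
  (hind : IndepFun C (fun ω x => Γ x ω) μ)
include hC hΓ hind

theorem measure_culprit_mem_inter_bearer_inter (s : Finset ι) (B : Set (ι → Bool)) :
    μ (C ⁻¹' s ∩ {ω | Γ (C ω) ω = true} ∩ (fun ω x => Γ x ω) ⁻¹' B)
      = ∑ i ∈ s, μ (C ⁻¹' {i}) * μ ({ω | Γ i ω = true} ∩ (fun ω x => Γ x ω) ⁻¹' B) := by
  have hB : MeasurableSet ((fun ω x => Γ x ω) ⁻¹' B) :=
    measurable_pi_lambda _ hΓ MeasurableSet.of_discrete
  rw [Set.inter_assoc, measure_preimage_inter_eq_sum hC s ((measurableSet_bearer hC hΓ).inter hB)]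
  simp only [← Set.inter_assoc, measure_culprit_inter_bearer_inter hind]

theorem measure_culprit_mem_inter_bearer_inter_databaseEvidence {D K : Finset ι}
    (hKD : K ⊆ D) :
    μ (C ⁻¹' D ∩ {ω | Γ (C ω) ω = true} ∩ databaseEvidence Γ D K)
      = (∑ i ∈ K, μ (C ⁻¹' {i})) * μ (databaseEvidence Γ D K) := by
  rw [databaseEvidence_eq_preimage, measure_culprit_mem_inter_bearer_inter hC hΓ hind,
    Finset.sum_mul, ← databaseEvidence_eq_preimage]
  refine (Finset.sum_subset hKD fun i hiD hiK => ?_).symm.trans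
    (Finset.sum_congr rfl fun i hi => ?_)
  · rw [bearer_inter_databaseEvidence_of_notMem hiD hiK, measure_empty, mul_zero]
  · rw [bearer_inter_databaseEvidence_of_mem hKD hi]

variable {p : ℝ≥0∞} (hBer : ∀ i, μ {ω | Γ i ω = true} = p)
include hBer

theorem measure_culprit_mem_inter_bearer (s : Finset ι) :
    μ (C ⁻¹' s ∩ {ω | Γ (C ω) ω = true}) = (∑ i ∈ s, μ (C ⁻¹' {i})) * p := by
  simpa [hBer, Finset.sum_mul] using
    measure_culprit_mem_inter_bearer_inter hC hΓ hind s Set.univ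

theorem measure_culprit_mem_inter_bearer_inter_databaseEvidence_of_disjoint
    (hiid : iIndepFun Γ μ) {s D : Finset ι} (hsD : Disjoint s D) (K : Finset ι) :
    μ (C ⁻¹' s ∩ {ω | Γ (C ω) ω = true} ∩ databaseEvidence Γ D K)
      = (∑ i ∈ s, μ (C ⁻¹' {i})) * p * μ (databaseEvidence Γ D K) := by
  rw [databaseEvidence_eq_preimage, measure_culprit_mem_inter_bearer_inter hC hΓ hind,
    Finset.sum_mul, Finset.sum_mul, ← databaseEvidence_eq_preimage]
  refine Finset.sum_congr rfl fun i hi => ?_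
  rw [measure_bearer_inter_databaseEvidence_of_notMem hΓ hiid hBer D K
    (Finset.disjoint_left.mp hsD hi), mul_assoc]

theorem sum_cond_bearer_culprit_eq (s : Finset ι) :
    ∑ i ∈ s, μ[|{ω | Γ (C ω) ω = true}] (C ⁻¹' {i})
      = (∑ i ∈ s, μ (C ⁻¹' {i})) * (p / μ {ω | Γ (C ω) ω = true}) := by
  rw [sum_measure_preimage_singleton s fun i _ => hC (measurableSet_singleton i),
    cond_apply (measurableSet_bearer hC hΓ), Set.inter_comm,
    measure_culprit_mem_inter_bearer hC hΓ hind hBer, ENNReal.div_eq_inv_mul, mul_left_comm]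

variable {D K : Finset ι}

theorem cond_culprit_mem_bearer_databaseEvidence (hKD : K ⊆ D) :
    μ[|C ⁻¹' D ∩ {ω | Γ (C ω) ω = true}] (databaseEvidence Γ D K)
      = (∑ i ∈ K, μ (C ⁻¹' {i})) * μ (databaseEvidence Γ D K)
        / ((∑ i ∈ D, μ (C ⁻¹' {i})) * p) := by
  rw [cond_apply ((hC D.measurableSet).inter (measurableSet_bearer hC hΓ)),
    measure_culprit_mem_inter_bearer hC hΓ hind hBer,
    measure_culprit_mem_inter_bearer_inter_databaseEvidence hC hΓ hind hKD,
    ENNReal.div_eq_inv_mul]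

variable [Fintype ι] [DecidableEq ι] [IsFiniteMeasure μ]

theorem cond_culprit_notMem_bearer_databaseEvidence (hiid : iIndepFun Γ μ)
    (hout : μ (C ⁻¹' ↑Dᶜ ∩ {ω | Γ (C ω) ω = true}) ≠ 0) :
    μ[|C ⁻¹' ↑Dᶜ ∩ {ω | Γ (C ω) ω = true}] (databaseEvidence Γ D K)
      = μ (databaseEvidence Γ D K) := by
  rw [cond_apply ((hC Dᶜ.measurableSet).inter (measurableSet_bearer hC hΓ)),
    measure_culprit_mem_inter_bearer_inter_databaseEvidence_of_disjoint hC hΓ hind hBer hiid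
      disjoint_compl_left K,
    ← measure_culprit_mem_inter_bearer hC hΓ hind hBer]
  exact ENNReal.inv_mul_cancel_left hout (measure_ne_top μ _)

theorem likelihoodRatio_databaseEvidence (hiid : iIndepFun Γ μ) (hp0 : p ≠ 0) (hp_top : p ≠ ∞)
    (hKD : K ⊆ D) (hout : μ (C ⁻¹' ↑Dᶜ ∩ {ω | Γ (C ω) ω = true}) ≠ 0)
    (hE : μ (databaseEvidence Γ D K) ≠ 0) :
    μ[|C ⁻¹' D ∩ {ω | Γ (C ω) ω = true}] (databaseEvidence Γ D K)
        / μ[|C ⁻¹' ↑Dᶜ ∩ {ω | Γ (C ω) ω = true}] (databaseEvidence Γ D K)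
      = (∑ i ∈ K, μ[|{ω | Γ (C ω) ω = true}] (C ⁻¹' {i}))
        / (p * ∑ i ∈ D, μ[|{ω | Γ (C ω) ω = true}] (C ⁻¹' {i})) := by
  have hG : μ {ω | Γ (C ω) ω = true} ≠ 0 :=
    fun h => hout (measure_mono_null Set.inter_subset_right h)
  rw [cond_culprit_mem_bearer_databaseEvidence hC hΓ hind hBer hKD,
    cond_culprit_notMem_bearer_databaseEvidence hC hΓ hind hBer hiid hout,
    ENNReal.mul_div_right_comm, ENNReal.mul_div_cancel_right hE (measure_ne_top μ _),
    sum_cond_bearer_culprit_eq hC hΓ hind hBer, sum_cond_bearer_culprit_eq hC hΓ hind hBer,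
    ← mul_assoc, mul_comm p, ENNReal.mul_div_mul_right _ _
      (ENNReal.div_pos hp0 (measure_ne_top μ _)).ne' (ENNReal.div_ne_top hp_top hG)]

theorem posteriorOdds_databaseEvidence (hiid : iIndepFun Γ μ) (hp0 : p ≠ 0) (hp_top : p ≠ ∞)
    (hKD : K ⊆ D) (hpos : μ (databaseEvidence Γ D K ∩ {ω | Γ (C ω) ω = true}) ≠ 0) :
    μ[|databaseEvidence Γ D K ∩ {ω | Γ (C ω) ω = true}] (C ⁻¹' D)
        / μ[|databaseEvidence Γ D K ∩ {ω | Γ (C ω) ω = true}] (C ⁻¹' ↑Dᶜ)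
      = (∑ i ∈ K, μ[|{ω | Γ (C ω) ω = true}] (C ⁻¹' {i}))
        / (p * ∑ i ∈ Dᶜ, μ[|{ω | Γ (C ω) ω = true}] (C ⁻¹' {i})) := by
  have hG : μ {ω | Γ (C ω) ω = true} ≠ 0 :=
    fun h => hpos (measure_mono_null Set.inter_subset_right h)
  have hE : μ (databaseEvidence Γ D K) ≠ 0 :=
    fun h => hpos (measure_mono_null Set.inter_subset_left h)
  have hswap : ∀ s : Set Ω, databaseEvidence Γ D K ∩ {ω | Γ (C ω) ω = true} ∩ s
      = s ∩ {ω | Γ (C ω) ω = true} ∩ databaseEvidence Γ D K := fun s => by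
    rw [Set.inter_comm _ s, Set.inter_comm (databaseEvidence Γ D K), Set.inter_assoc]
  have hEG_meas : MeasurableSet (databaseEvidence Γ D K ∩ {ω | Γ (C ω) ω = true}) :=
    (measurableSet_databaseEvidence hΓ D K).inter (measurableSet_bearer hC hΓ)
  rw [cond_apply hEG_meas, cond_apply hEG_meas, ENNReal.mul_div_mul_left _ _
      (ENNReal.inv_ne_zero.mpr (measure_ne_top μ _)) (ENNReal.inv_ne_top.mpr hpos),
    hswap, hswap, measure_culprit_mem_inter_bearer_inter_databaseEvidence hC hΓ hind hKD,
    measure_culprit_mem_inter_bearer_inter_databaseEvidence_of_disjoint hC hΓ hind hBer hiid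
      disjoint_compl_left K,
    ENNReal.mul_div_mul_right _ _ hE (measure_ne_top μ _),
    sum_cond_bearer_culprit_eq hC hΓ hind hBer, sum_cond_bearer_culprit_eq hC hΓ hind hBer,
    ← mul_assoc, mul_comm p, ENNReal.mul_div_mul_right _ _
      (ENNReal.div_pos hp0 (measure_ne_top μ _)).ne' (ENNReal.div_ne_top hp_top hG)]

end Culprit

end IslandProblem

open IslandProblem

theorem island_database_focused_general
    {Ω : Type*} [MeasurableSpace Ω] (μ : Measure Ω) [IsProbabilityMeasure μ]
    (N : ℕ) (C : Ω → Fin (N + 1)) (hC : Measurable C)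
    (Γ : Fin (N + 1) → Ω → Bool) (hΓ : ∀ x, Measurable (Γ x))
    (p : ℝ≥0∞) (hp0 : p ≠ 0) (hp1 : p < 1)
    (hiid : iIndepFun Γ μ)
    (hBer : ∀ x, μ {ω | Γ x ω = true} = p)
    (hind : IndepFun C (fun ω x => Γ x ω) μ)
    (n k : ℕ) (hkn : k ≤ n)
    (α : Fin (N + 1) → ℝ≥0∞)
    (hα : ∀ i, α i = μ[|{ω | Γ (C ω) ω = true}] {ω | C ω = i})
    -- the database evidence: among the database members, exactly the first `k` bear `Γ`
    (ED : Set Ω)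
    (hED : ED = {ω | ∀ i : Fin (N + 1), (i : ℕ) < n → (Γ i ω = true ↔ (i : ℕ) < k)})
    (hpos2 : μ ({ω | ¬ (C ω : ℕ) < n} ∩ {ω | Γ (C ω) ω = true}) ≠ 0)
    (hpos3 : μ (ED ∩ {ω | Γ (C ω) ω = true}) ≠ 0) :
    μ[|{ω | (C ω : ℕ) < n} ∩ {ω | Γ (C ω) ω = true}] ED
        / μ[|{ω | ¬ (C ω : ℕ) < n} ∩ {ω | Γ (C ω) ω = true}] ED
      = (∑ i ∈ Finset.univ.filter (fun i : Fin (N + 1) => (i : ℕ) < k), α i)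
        / (p * ∑ i ∈ Finset.univ.filter (fun i : Fin (N + 1) => (i : ℕ) < n), α i) ∧
    μ[|ED ∩ {ω | Γ (C ω) ω = true}] {ω | (C ω : ℕ) < n}
        / μ[|ED ∩ {ω | Γ (C ω) ω = true}] {ω | ¬ (C ω : ℕ) < n}
      = (∑ i ∈ Finset.univ.filter (fun i : Fin (N + 1) => (i : ℕ) < k), α i)
        / (p * ∑ i ∈ Finset.univ.filter (fun i : Fin (N + 1) => ¬ (i : ℕ) < n), α i) := by
  set D := Finset.univ.filter fun i : Fin (N + 1) => (i : ℕ) < n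
  set K := Finset.univ.filter fun i : Fin (N + 1) => (i : ℕ) < k
  have hKD : K ⊆ D := fun i hi => by
    simp only [K, D, Finset.mem_filter, Finset.mem_univ, true_and] at hi ⊢
    omega
  have hin : {ω | (C ω : ℕ) < n} = C ⁻¹' D := by ext; simp [D]
  have hout : {ω | ¬ (C ω : ℕ) < n} = C ⁻¹' ↑Dᶜ := by ext; simp [D]
  have hDc : Finset.univ.filter (fun i : Fin (N + 1) => ¬ (i : ℕ) < n) = Dᶜ := by ext; simp [D]
  obtain rfl : ED = databaseEvidence Γ D K := by ext; simp [hED, databaseEvidence, D, K]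
  obtain rfl : α = fun i => μ[|{ω | Γ (C ω) ω = true}] (C ⁻¹' {i}) := funext hα
  rw [hout] at hpos2
  rw [hin, hout, hDc]
  exact ⟨likelihoodRatio_databaseEvidence hC hΓ hind hBer hiid hp0 (ne_top_of_lt hp1) hKD hpos2
      fun h => hpos3 (measure_mono_null Set.inter_subset_left h),
    posteriorOdds_databaseEvidence hC hΓ hind hBer hiid hp0 (ne_top_of_lt hp1) hKD hpos3⟩

/-- Database-focused likelihood ratio and posterior odds: with a database consisting of
the first `n` individuals, whose observed `Γ`-statuses are: the first `k` bear `Γ` and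
the others do not, the likelihood ratio of the database evidence in favour of `C ∈ D`
is `(α_1+⋯+α_k)/(p (α_1+⋯+α_n))`, and the posterior odds are
`(α_1+⋯+α_k)/(p (α_{n+1}+⋯+α_{N+1}))`. -/
theorem island_database_focused
    {Ω : Type*} [MeasurableSpace Ω] (μ : Measure Ω) [IsProbabilityMeasure μ]
    (N : ℕ) (C : Ω → Fin (N + 1)) (hC : Measurable C)
    (Γ : Fin (N + 1) → Ω → Bool) (hΓ : ∀ x, Measurable (Γ x))
    (p : ℝ≥0∞) (hp0 : p ≠ 0) (hp1 : p < 1)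
    (hiid : iIndepFun Γ μ)
    (hBer : ∀ x, μ {ω | Γ x ω = true} = p)
    (hind : IndepFun C (fun ω x => Γ x ω) μ)
    (n k : ℕ) (hkn : k ≤ n) (hn : n ≤ N + 1)
    (α : Fin (N + 1) → ℝ≥0∞)
    (hα : ∀ i, α i = μ[|{ω | Γ (C ω) ω = true}] {ω | C ω = i})
    (hαpos : ∀ i, α i ≠ 0)
    -- the database evidence: among the database members, exactly the first `k` bear `Γ`
    (ED : Set Ω)
    (hED : ED = {ω | ∀ i : Fin (N + 1), (i : ℕ) < n → (Γ i ω = true ↔ (i : ℕ) < k)})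
    (hpos1 : μ ({ω | (C ω : ℕ) < n} ∩ {ω | Γ (C ω) ω = true}) ≠ 0)
    (hpos2 : μ ({ω | ¬ (C ω : ℕ) < n} ∩ {ω | Γ (C ω) ω = true}) ≠ 0)
    (hpos3 : μ (ED ∩ {ω | Γ (C ω) ω = true}) ≠ 0) :
    μ[|{ω | (C ω : ℕ) < n} ∩ {ω | Γ (C ω) ω = true}] ED
        / μ[|{ω | ¬ (C ω : ℕ) < n} ∩ {ω | Γ (C ω) ω = true}] ED
      = (∑ i ∈ Finset.univ.filter (fun i : Fin (N + 1) => (i : ℕ) < k), α i)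
        / (p * ∑ i ∈ Finset.univ.filter (fun i : Fin (N + 1) => (i : ℕ) < n), α i) ∧
    μ[|ED ∩ {ω | Γ (C ω) ω = true}] {ω | (C ω : ℕ) < n}
        / μ[|ED ∩ {ω | Γ (C ω) ω = true}] {ω | ¬ (C ω : ℕ) < n}
      = (∑ i ∈ Finset.univ.filter (fun i : Fin (N + 1) => (i : ℕ) < k), α i)
        / (p * ∑ i ∈ Finset.univ.filter (fun i : Fin (N + 1) => ¬ (i : ℕ) < n), α i) :=
  island_database_focused_general μ N C hC Γ hΓ p hp0 hp1 hiid hBer hind n k hkn α hα ED hED hpos2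
    hpos3
end

section
/- Database effectiveness odds: let E_1 be the event that exactly one member of the database D (of size n) bears Γ, and let S denote that unique member. Then P(S=C | E_1, Γ_C=1) / P(S≠C | E_1, Γ_C=1) = (1/(np)) · P(C∈D | Γ_C=1) / P(C∉D | Γ_C=1). -/
/-!
Given `Γ_C = 1`, on `E₁` the unique database bearer `S` equals `C` exactly when `C ∈ D`.
As `C` is independent of the `Γ_x`, both conditional probabilities reduce to `P(E₁, Γ_x = 1)`
for fixed `x`: this is `p (1 - p)^(n - 1)` when `x ∈ D` (then `x` is the unique bearer),
and `n p (1 - p)^(n - 1) · p` when `x ∉ D` (the bearer is any of the `n` members of `D`,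
independently of `Γ_x`). Summing over the values of `C` and comparing with
`P(C ∈ D, Γ_C = 1) = p P(C ∈ D)` leaves the factor `1 / (n p)`.
-/

open MeasureTheory ProbabilityTheory Finset
open scoped ENNReal

theorem card_filter_eq_one_iff_exists_forall_eq_decide {ι : Type*} [DecidableEq ι]
    (s : Finset ι) (f : ι → Bool) :
    #{j ∈ s | f j = true} = 1 ↔ ∃ k ∈ s, ∀ j ∈ s, f j = decide (j = k) := by
  simp only [card_eq_one, Finset.ext_iff, mem_filter, mem_singleton]
  constructor
  · rintro ⟨k, hk⟩
    refine ⟨k, ((hk k).2 rfl).1, fun j hj => ?_⟩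
    rw [Bool.eq_iff_iff, decide_eq_true_iff, ← hk j]
    exact (and_iff_right hj).symm
  · rintro ⟨k, hks, hk⟩
    exact ⟨k, fun j => by grind⟩

theorem card_filter_eq_one_and_iff {ι : Type*} [DecidableEq ι] {s : Finset ι} {k : ι}
    (hk : k ∈ s) (f : ι → Bool) :
    (#{j ∈ s | f j = true} = 1 ∧ f k = true) ↔ ∀ j ∈ s, f j = decide (j = k) := by
  rw [card_filter_eq_one_iff_exists_forall_eq_decide]
  constructor
  · rintro ⟨⟨l, -, hl⟩, hfk⟩
    grind
  · intro h
    exact ⟨⟨k, hk, h⟩, by simpa using h k hk⟩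

theorem eq_iff_mem_of_card_filter_eq_one {ι : Type*} [DecidableEq ι] {s : Finset ι}
    {f : ι → Bool} (h : #{j ∈ s | f j = true} = 1) {x y : ι} (hx : x ∈ s) (hfx : f x = true)
    (hfy : f y = true) : x = y ↔ y ∈ s := by
  refine ⟨fun hxy => hxy ▸ hx, fun hy => ?_⟩
  simpa [hfy, eq_comm] using (card_filter_eq_one_and_iff hx f).1 ⟨h, hfx⟩ y hy

section BernoulliFamily

variable {Ω ι : Type*} [MeasurableSpace Ω] {μ : Measure Ω} {Γ : ι → Ω → Bool}

theorem measurableSet_forall_mem_eq (hΓm : ∀ i, Measurable (Γ i)) (s : Finset ι)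
    (b : ι → Bool) : MeasurableSet {ω | ∀ j ∈ s, Γ j ω = b j} := by
  have hset : {ω | ∀ j ∈ s, Γ j ω = b j} = ⋂ j ∈ s, Γ j ⁻¹' {b j} := by ext; simp
  exact hset ▸ s.measurableSet_biInter fun j _ => hΓm j (measurableSet_singleton _)

theorem measure_forall_mem_eq (hΓ : iIndepFun Γ μ) (s : Finset ι) (b : ι → Bool) :
    μ {ω | ∀ j ∈ s, Γ j ω = b j} = ∏ j ∈ s, μ {ω | Γ j ω = b j} := by
  rw [← hΓ.meas_biInter (s := fun j => {ω | Γ j ω = b j}) fun j _ =>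
    ⟨{b j}, measurableSet_singleton _, rfl⟩]
  congr 1
  ext ω
  simp

theorem measure_forall_mem_eq_inter_of_notMem [DecidableEq ι] (hΓ : iIndepFun Γ μ)
    {s : Finset ι} {k : ι} (hk : k ∉ s) (b : ι → Bool) (c : Bool) :
    μ ({ω | ∀ j ∈ s, Γ j ω = b j} ∩ {ω | Γ k ω = c})
      = μ {ω | ∀ j ∈ s, Γ j ω = b j} * μ {ω | Γ k ω = c} := by
  have hb : ∀ j ∈ s, Function.update b k c j = b j := fun j hj =>
    Function.update_of_ne (ne_of_mem_of_not_mem hj hk) c b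
  have hset : {ω | ∀ j ∈ s, Γ j ω = b j} ∩ {ω | Γ k ω = c}
      = {ω | ∀ j ∈ insert k s, Γ j ω = Function.update b k c j} := by
    ext ω
    simp only [Set.mem_inter_iff, Set.mem_ofPred_eq, forall_mem_insert, Function.update_self]
    refine ⟨fun h => ⟨h.2, fun j hj => ?_⟩, fun h => ⟨fun j hj => ?_, h.1⟩⟩
    · rw [hb j hj]; exact h.1 j hj
    · rw [← hb j hj]; exact h.2 j hj
  rw [hset, measure_forall_mem_eq hΓ, prod_insert hk, measure_forall_mem_eq hΓ, mul_comm,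
    Function.update_self, prod_congr rfl fun j hj => by rw [hb j hj]]

variable [IsProbabilityMeasure μ] {p : ℝ≥0∞}

theorem measure_eq_false (hΓm : ∀ i, Measurable (Γ i)) (hp : ∀ i, μ {ω | Γ i ω = true} = p)
    (i : ι) : μ {ω | Γ i ω = false} = 1 - p := by
  have hcompl : {ω | Γ i ω = false} = {ω | Γ i ω = true}ᶜ := by ext ω; simp
  rw [hcompl, prob_compl_eq_one_sub (s := {ω | Γ i ω = true})
    ((hΓm i) (measurableSet_singleton true)), hp]

theorem measure_forall_mem_eq_decide [DecidableEq ι] (hΓm : ∀ i, Measurable (Γ i))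
    (hΓ : iIndepFun Γ μ) (hp : ∀ i, μ {ω | Γ i ω = true} = p) {s : Finset ι} {k : ι}
    (hk : k ∈ s) :
    μ {ω | ∀ j ∈ s, Γ j ω = decide (j = k)} = p * (1 - p) ^ (#s - 1) := by
  rw [measure_forall_mem_eq hΓ, ← mul_prod_erase _ _ hk, decide_eq_true (rfl : k = k), hp,
    prod_congr rfl fun j hj => by
      rw [decide_eq_false (ne_of_mem_erase hj), measure_eq_false hΓm hp],
    prod_const, card_erase_of_mem hk]

theorem measure_card_filter_eq_one_and_of_mem [DecidableEq ι] (hΓm : ∀ i, Measurable (Γ i))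
    (hΓ : iIndepFun Γ μ) (hp : ∀ i, μ {ω | Γ i ω = true} = p) {s : Finset ι} {k : ι}
    (hk : k ∈ s) :
    μ {ω | #{j ∈ s | Γ j ω = true} = 1 ∧ Γ k ω = true} = p * (1 - p) ^ (#s - 1) := by
  simp_rw [card_filter_eq_one_and_iff hk]
  exact measure_forall_mem_eq_decide hΓm hΓ hp hk

theorem measure_card_filter_eq_one_and_of_notMem [DecidableEq ι]
    (hΓm : ∀ i, Measurable (Γ i)) (hΓ : iIndepFun Γ μ) (hp : ∀ i, μ {ω | Γ i ω = true} = p)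
    {s : Finset ι} {k : ι} (hk : k ∉ s) :
    μ {ω | #{j ∈ s | Γ j ω = true} = 1 ∧ Γ k ω = true}
      = #s * (p * (1 - p) ^ (#s - 1)) * p := by
  have hset : {ω | #{j ∈ s | Γ j ω = true} = 1 ∧ Γ k ω = true}
      = ⋃ l ∈ s, {ω | ∀ j ∈ s, Γ j ω = decide (j = l)} ∩ {ω | Γ k ω = true} := by
    ext ω
    simp only [Set.mem_ofPred_eq, card_filter_eq_one_iff_exists_forall_eq_decide,
      Set.mem_iUnion, Set.mem_inter_iff, exists_prop]
    tauto
  rw [hset, measure_biUnion_finset]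
  · rw [sum_congr rfl fun l hl => by
      rw [measure_forall_mem_eq_inter_of_notMem hΓ hk, measure_forall_mem_eq_decide hΓm hΓ hp hl,
        hp], sum_const, nsmul_eq_mul]
    ring
  · intro l hl l' _ hne
    refine Set.disjoint_left.2 fun ω hω hω' => hne ?_
    simpa using (hω.1 l hl).symm.trans (hω'.1 l hl)
  · exact fun l _ =>
      (measurableSet_forall_mem_eq hΓm s _).inter (hΓm k (measurableSet_singleton true))

end BernoulliFamily

theorem measure_mem_and_mem_of_indepFun {Ω ι β : Type*} [MeasurableSpace Ω] [MeasurableSpace ι]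
    [MeasurableSingletonClass ι] [MeasurableSpace β] {μ : Measure Ω} {X : Ω → ι} {Y : Ω → β}
    (hX : Measurable X) (hY : Measurable Y) (hXY : IndepFun X Y μ) {A : ι → Set β}
    (hA : ∀ i, MeasurableSet (A i)) (T : Finset ι) :
    μ {ω | X ω ∈ T ∧ Y ω ∈ A (X ω)} = ∑ i ∈ T, μ (X ⁻¹' {i}) * μ (Y ⁻¹' A i) := by
  have hset : {ω | X ω ∈ T ∧ Y ω ∈ A (X ω)} = ⋃ i ∈ T, X ⁻¹' {i} ∩ Y ⁻¹' A i := by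
    ext ω
    simp
  rw [hset, measure_biUnion_finset]
  · exact sum_congr rfl fun i _ =>
      hXY.measure_inter_preimage_eq_mul _ _ (measurableSet_singleton i) (hA i)
  · intro i _ j _ hij
    exact Set.disjoint_left.2 fun ω hωi hωj => hij (hωi.1.symm.trans hωj.1)
  · exact fun i _ => (hX (measurableSet_singleton i)).inter (hY (hA i))

theorem cond_div_cond_s19 {Ω : Type*} [MeasurableSpace Ω] {μ : Measure Ω} [IsFiniteMeasure μ]
    {s t u : Set Ω} (ht : MeasurableSet t) (hu : MeasurableSet u) (hs : μ s ≠ 0) :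
    μ[t | s] / μ[u | s] = μ (s ∩ t) / μ (s ∩ u) := by
  rw [cond_apply' ht, cond_apply' hu, ENNReal.mul_div_mul_left _ _
    (ENNReal.inv_ne_zero.2 (measure_ne_top μ s)) (ENNReal.inv_ne_top.2 hs)]

theorem ENNReal.mul_div_mul_mul_mul_eq_one_div_mul {a b c k p : ℝ≥0∞} (hc0 : c ≠ 0)
    (hc : c ≠ ∞) (hk0 : k ≠ 0) (hk : k ≠ ∞) (hp0 : p ≠ 0) (hp : p ≠ ∞) :
    a * c / (b * (k * c * p)) = 1 / (k * p) * (a * p / (b * p)) := by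
  calc a * c / (b * (k * c * p)) = c * a / (c * (b * (k * p))) := by ring_nf
    _ = a / (b * (k * p)) := ENNReal.mul_div_mul_left _ _ hc0 hc
    _ = (k * p)⁻¹ * (a / b) := by
      rw [div_eq_mul_inv, div_eq_mul_inv, ENNReal.mul_inv (Or.inr (mul_ne_top hk hp))
        (Or.inr (mul_ne_zero hk0 hp0))]
      ring
    _ = 1 / (k * p) * (a * p / (b * p)) := by rw [ENNReal.mul_div_mul_right _ _ hp0 hp, one_div]

section Database

variable {Ω ι : Type*} [MeasurableSpace Ω] {μ : Measure Ω} [MeasurableSpace ι]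
  [MeasurableSingletonClass ι] {C : Ω → ι} {Γ : ι → Ω → Bool} {p : ℝ≥0∞}

theorem measure_mem_and_bearer (hC : Measurable C) (hΓm : ∀ i, Measurable (Γ i))
    (hind : IndepFun C (fun ω x => Γ x ω) μ) (hp : ∀ i, μ {ω | Γ i ω = true} = p)
    (T : Finset ι) :
    μ {ω | C ω ∈ T ∧ Γ (C ω) ω = true} = (∑ i ∈ T, μ (C ⁻¹' {i})) * p := by
  refine (measure_mem_and_mem_of_indepFun hC (measurable_pi_lambda _ hΓm) hind
    (A := fun i => {f | f i = true}) (fun i => measurable_pi_apply i (measurableSet_singleton _))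
    T).trans ?_
  rw [sum_mul]
  exact sum_congr rfl fun i _ => congrArg _ (hp i)

variable [DecidableEq ι] [Fintype ι] [IsProbabilityMeasure μ]

theorem measure_mem_and_unique_bearer_of_subset (hC : Measurable C)
    (hΓm : ∀ i, Measurable (Γ i)) (hiid : iIndepFun Γ μ)
    (hind : IndepFun C (fun ω x => Γ x ω) μ) (hp : ∀ i, μ {ω | Γ i ω = true} = p)
    {D T : Finset ι} (hT : T ⊆ D) :
    μ {ω | C ω ∈ T ∧ #{j ∈ D | Γ j ω = true} = 1 ∧ Γ (C ω) ω = true}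
      = (∑ i ∈ T, μ (C ⁻¹' {i})) * (p * (1 - p) ^ (#D - 1)) := by
  refine (measure_mem_and_mem_of_indepFun hC (measurable_pi_lambda _ hΓm) hind
    (A := fun i => {f | #{j ∈ D | f j = true} = 1 ∧ f i = true})
    (fun _ => (Set.toFinite _).measurableSet) T).trans ?_
  rw [sum_mul]
  exact sum_congr rfl fun i hi =>
    congrArg _ (measure_card_filter_eq_one_and_of_mem hΓm hiid hp (hT hi))

theorem measure_mem_and_unique_bearer_of_disjoint (hC : Measurable C)
    (hΓm : ∀ i, Measurable (Γ i)) (hiid : iIndepFun Γ μ)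
    (hind : IndepFun C (fun ω x => Γ x ω) μ) (hp : ∀ i, μ {ω | Γ i ω = true} = p)
    {D T : Finset ι} (hT : Disjoint T D) :
    μ {ω | C ω ∈ T ∧ #{j ∈ D | Γ j ω = true} = 1 ∧ Γ (C ω) ω = true}
      = (∑ i ∈ T, μ (C ⁻¹' {i})) * (#D * (p * (1 - p) ^ (#D - 1)) * p) := by
  refine (measure_mem_and_mem_of_indepFun hC (measurable_pi_lambda _ hΓm) hind
    (A := fun i => {f | #{j ∈ D | f j = true} = 1 ∧ f i = true})
    (fun _ => (Set.toFinite _).measurableSet) T).trans ?_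
  rw [sum_mul]
  exact sum_congr rfl fun i hi =>
    congrArg _ (measure_card_filter_eq_one_and_of_notMem hΓm hiid hp (disjoint_left.1 hT hi))

theorem cond_match_div_cond_mismatch {S : Ω → ι} (hC : Measurable C) (hS : Measurable S)
    (hΓm : ∀ i, Measurable (Γ i)) (hiid : iIndepFun Γ μ)
    (hind : IndepFun C (fun ω x => Γ x ω) μ) (hp : ∀ i, μ {ω | Γ i ω = true} = p)
    (hp0 : p ≠ 0) (hp1 : p < 1) {D : Finset ι} (hD : D.Nonempty)
    (hSD : ∀ ω, #{j ∈ D | Γ j ω = true} = 1 → S ω ∈ D ∧ Γ (S ω) ω = true)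
    (hpos : μ ({ω | #{j ∈ D | Γ j ω = true} = 1} ∩ {ω | Γ (C ω) ω = true}) ≠ 0)
    (hposI : μ {ω | Γ (C ω) ω = true} ≠ 0) :
    μ[{ω | S ω = C ω} | {ω | #{j ∈ D | Γ j ω = true} = 1} ∩ {ω | Γ (C ω) ω = true}]
        / μ[{ω | S ω ≠ C ω} | {ω | #{j ∈ D | Γ j ω = true} = 1} ∩ {ω | Γ (C ω) ω = true}]
      = 1 / (#D * p)
        * (μ[{ω | C ω ∈ D} | {ω | Γ (C ω) ω = true}]
            / μ[{ω | C ω ∉ D} | {ω | Γ (C ω) ω = true}]) := by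
  have hmatch (ω) (hE : #{j ∈ D | Γ j ω = true} = 1) (hΓC : Γ (C ω) ω = true) :
      S ω = C ω ↔ C ω ∈ D :=
    eq_iff_mem_of_card_filter_eq_one hE (hSD ω hE).1 (hSD ω hE).2 hΓC
  have hsame : {ω | #{j ∈ D | Γ j ω = true} = 1} ∩ {ω | Γ (C ω) ω = true} ∩ {ω | S ω = C ω}
      = {ω | C ω ∈ D ∧ #{j ∈ D | Γ j ω = true} = 1 ∧ Γ (C ω) ω = true} := by
    ext ω
    have := hmatch ω
    simp only [Set.mem_inter_iff, Set.mem_ofPred_eq]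
    tauto
  have hdiff : {ω | #{j ∈ D | Γ j ω = true} = 1} ∩ {ω | Γ (C ω) ω = true} ∩ {ω | S ω ≠ C ω}
      = {ω | C ω ∈ Dᶜ ∧ #{j ∈ D | Γ j ω = true} = 1 ∧ Γ (C ω) ω = true} := by
    ext ω
    have := hmatch ω
    simp only [Set.mem_inter_iff, Set.mem_ofPred_eq, mem_compl]
    tauto
  have hin : {ω | Γ (C ω) ω = true} ∩ {ω | C ω ∈ D} = {ω | C ω ∈ D ∧ Γ (C ω) ω = true} :=
    Set.inter_comm _ _
  have hout : {ω | Γ (C ω) ω = true} ∩ {ω | C ω ∉ D}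
      = {ω | C ω ∈ Dᶜ ∧ Γ (C ω) ω = true} := by
    ext ω
    simp only [Set.mem_inter_iff, Set.mem_ofPred_eq, mem_compl]
    tauto
  have hSC : MeasurableSet {ω | S ω = C ω} := measurableSet_eq_fun hS hC
  have hCD : MeasurableSet {ω | C ω ∈ D} := hC D.measurableSet
  rw [cond_div_cond_s19 (u := {ω | S ω ≠ C ω}) hSC hSC.compl hpos,
    cond_div_cond_s19 (u := {ω | C ω ∉ D}) hCD hCD.compl hposI, hsame, hdiff, hin, hout,
    measure_mem_and_unique_bearer_of_subset hC hΓm hiid hind hp subset_rfl,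
    measure_mem_and_unique_bearer_of_disjoint hC hΓm hiid hind hp disjoint_compl_left,
    measure_mem_and_bearer hC hΓm hind hp, measure_mem_and_bearer hC hΓm hind hp]
  exact ENNReal.mul_div_mul_mul_mul_eq_one_div_mul
    (mul_ne_zero hp0 (pow_ne_zero _ (tsub_pos_of_lt hp1).ne'))
    (ENNReal.mul_ne_top hp1.ne_top (ENNReal.pow_ne_top (ENNReal.sub_ne_top ENNReal.one_ne_top)))
    (Nat.cast_ne_zero.2 hD.card_pos.ne') (ENNReal.natCast_ne_top _) hp0 hp1.ne_top

end Database

theorem island_database_effectiveness_general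
    {Ω : Type*} [MeasurableSpace Ω] (μ : Measure Ω) [IsProbabilityMeasure μ]
    (N : ℕ) (C : Ω → Fin (N + 1)) (hC : Measurable C)
    (Γ : Fin (N + 1) → Ω → Bool) (hΓ : ∀ x, Measurable (Γ x))
    (p : ℝ≥0∞) (hp0 : p ≠ 0) (hp1 : p < 1)
    (hiid : iIndepFun Γ μ)
    (hBer : ∀ x, μ {ω | Γ x ω = true} = p)
    (hind : IndepFun C (fun ω x => Γ x ω) μ)
    (n : ℕ) (hn0 : 0 < n) (hn : n ≤ N + 1)
    -- `E₁`: exactly one database member bears `Γ`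
    (E1 : Set Ω)
    (hE1 : E1 = {ω | (Finset.univ.filter
        (fun i : Fin (N + 1) => (i : ℕ) < n ∧ Γ i ω = true)).card = 1})
    -- `S` is the unique database `Γ`-bearer on `E₁`
    (S : Ω → Fin (N + 1)) (hS : Measurable S)
    (hSdef : ∀ ω ∈ E1, (S ω : ℕ) < n ∧ Γ (S ω) ω = true)
    (hpos : μ (E1 ∩ {ω | Γ (C ω) ω = true}) ≠ 0)
    (hposI : μ {ω | Γ (C ω) ω = true} ≠ 0) :
    μ[|E1 ∩ {ω | Γ (C ω) ω = true}] {ω | S ω = C ω}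
        / μ[|E1 ∩ {ω | Γ (C ω) ω = true}] {ω | S ω ≠ C ω}
      = (1 / (n * p))
        * (μ[|{ω | Γ (C ω) ω = true}] {ω | (C ω : ℕ) < n}
            / μ[|{ω | Γ (C ω) ω = true}] {ω | ¬ (C ω : ℕ) < n}) := by
  set D : Finset (Fin (N + 1)) := {i | (i : ℕ) < n}
  have hmem (i : Fin (N + 1)) : i ∈ D ↔ (i : ℕ) < n := by simp [D]
  have hcard : #D = n := by simpa [D, Fin.card_filter_val_lt] using hn
  have hE : E1 = {ω | #{j ∈ D | Γ j ω = true} = 1} := by simp [hE1, D, filter_filter]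
  subst hE
  have hodds := cond_match_div_cond_mismatch hC hS hΓ hiid hind hBer hp0 hp1
    (card_pos.1 (hcard ▸ hn0)) (fun ω hω => by simpa [hmem] using hSdef ω hω) hpos hposI
  simpa [hmem, hcard] using hodds

/-- Database effectiveness odds: if `E₁` is the event that exactly one database member
bears `Γ` and `S` denotes that unique member, then
`P(S=C | E₁, I) / P(S≠C | E₁, I) = (1/(np)) · P(C∈D | I) / P(C∉D | I)`. -/
theorem island_database_effectiveness
    {Ω : Type*} [MeasurableSpace Ω] (μ : Measure Ω) [IsProbabilityMeasure μ]
    (N : ℕ) (C : Ω → Fin (N + 1)) (hC : Measurable C)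
    (Γ : Fin (N + 1) → Ω → Bool) (hΓ : ∀ x, Measurable (Γ x))
    (p : ℝ≥0∞) (hp0 : p ≠ 0) (hp1 : p < 1)
    (hiid : iIndepFun Γ μ)
    (hBer : ∀ x, μ {ω | Γ x ω = true} = p)
    (hind : IndepFun C (fun ω x => Γ x ω) μ)
    (n : ℕ) (hn0 : 0 < n) (hn : n ≤ N + 1)
    (hαpos : ∀ i : Fin (N + 1), μ[|{ω | Γ (C ω) ω = true}] {ω | C ω = i} ≠ 0)
    -- `E₁`: exactly one database member bears `Γ`
    (E1 : Set Ω)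
    (hE1 : E1 = {ω | (Finset.univ.filter
        (fun i : Fin (N + 1) => (i : ℕ) < n ∧ Γ i ω = true)).card = 1})
    -- `S` is the unique database `Γ`-bearer on `E₁`
    (S : Ω → Fin (N + 1)) (hS : Measurable S)
    (hSdef : ∀ ω ∈ E1, (S ω : ℕ) < n ∧ Γ (S ω) ω = true)
    (hpos : μ (E1 ∩ {ω | Γ (C ω) ω = true}) ≠ 0)
    (hposI : μ {ω | Γ (C ω) ω = true} ≠ 0) :
    μ[|E1 ∩ {ω | Γ (C ω) ω = true}] {ω | S ω = C ω}
        / μ[|E1 ∩ {ω | Γ (C ω) ω = true}] {ω | S ω ≠ C ω}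
      = (1 / (n * p))
        * (μ[|{ω | Γ (C ω) ω = true}] {ω | (C ω : ℕ) < n}
            / μ[|{ω | Γ (C ω) ω = true}] {ω | ¬ (C ω : ℕ) < n}) :=
  island_database_effectiveness_general μ N C hC Γ hΓ p hp0 hp1 hiid hBer hind n hn0 hn E1 hE1 S hS
    hSdef hpos hposI
end
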